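/- arXiv:1002.1356 — 11 statements merged into one kernel-verified Lean document; each statement's English description precedes it below -/
import Mathlib

section
/- If C(z) is an odd rational function with real coefficients such that Re C(z) > 0 whenever Re z > 0, then every complex solution z of the equation C(z) = 1 satisfies Re z > 0. -/
/-!
Write `C = P / Q` in lowest terms. Oddness of `C` becomes the polynomial identity
`P(-X) Q + P Q(-X) = 0`; as `P` and `Q` have no common root, `Q(z) ≠ 0` then forces `Q(-z) ≠ 0`,
so `P(-z) / Q(-z) = -1` at a solution of `C(z) = 1`. The reduced fraction is continuous where
`Q ≠ 0` and agrees with `C` off finitely many points, so its real part is `≥ 0` on the closed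
right half-plane, which therefore cannot contain `-z`.
-/

open Polynomial Filter Topology

namespace Polynomial

variable {K : Type*}

/-- `P / Q` is an odd rational function. -/
def IsOddFraction [CommRing K] (P Q : K[X]) : Prop :=
  P.comp (-X) * Q + P * Q.comp (-X) = 0

theorem isOddFraction_of_eval [CommRing K] [IsDomain K] [Infinite K] {P Q R : K[X]} (hR : R ≠ 0)
    (h : ∀ z, R.eval z ≠ 0 → R.eval (-z) ≠ 0 →
      P.eval (-z) * Q.eval z + P.eval z * Q.eval (-z) = 0) :
    IsOddFraction P Q := by
  have hR' : R.comp (-X) ≠ 0 := fun h0 ↦ hR <| by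
    simpa [comp_neg_X_comp_neg_X] using congrArg (·.comp (-X)) h0
  suffices (P.comp (-X) * Q + P * Q.comp (-X)) * (R * R.comp (-X)) = 0 from
    (mul_eq_zero.1 this).resolve_right (mul_ne_zero hR hR')
  refine Polynomial.funext fun z ↦ ?_
  by_cases hz : R.eval z = 0
  · simp [hz]
  by_cases hz' : R.eval (-z) = 0
  · simp [hz']
  simp [h z hz hz']

theorem IsOddFraction.eval_neg_ne_zero [CommRing K] [IsDomain K] {P Q : K[X]}
    (hodd : IsOddFraction P Q) (hPQ : IsCoprime P Q) {z : K} (hz : Q.eval z ≠ 0) :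
    Q.eval (-z) ≠ 0 := by
  intro hQ
  have hP : P.eval (-z) = 0 := by
    simpa [IsOddFraction, hQ, hz] using congrArg (eval z) hodd
  simpa [hP, hQ] using aeval_ne_zero_of_isCoprime hPQ (-z)

theorem IsOddFraction.eval_neg_div [Field K] {P Q : K[X]} (hodd : IsOddFraction P Q) {z : K}
    (hz : Q.eval z ≠ 0) (hz' : Q.eval (-z) ≠ 0) :
    P.eval (-z) / Q.eval (-z) = -(P.eval z / Q.eval z) := by
  have := congrArg (eval z) hodd
  simp only [eval_add, eval_mul, eval_comp, eval_neg, eval_X, eval_zero] at this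
  field_simp
  linear_combination this

theorem exists_isCoprime_eval_div_eq [Field K] {P Q : K[X]} (hQ : Q ≠ 0) :
    ∃ P' Q' : K[X], IsCoprime P' Q' ∧
      ∀ z, Q.eval z ≠ 0 → Q'.eval z ≠ 0 ∧ P.eval z / Q.eval z = P'.eval z / Q'.eval z := by
  classical
  set g := GCDMonoid.gcd P Q
  have hg : g ≠ 0 := gcd_ne_zero_of_right hQ
  have hP : P = g * (P / g) := (EuclideanDomain.mul_div_cancel' hg (gcd_dvd_left _ _)).symm
  have hQ' : Q = g * (Q / g) := (EuclideanDomain.mul_div_cancel' hg (gcd_dvd_right _ _)).symm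
  refine ⟨P / g, Q / g, isCoprime_div_gcd_div_gcd hQ, fun z hz ↦ ?_⟩
  set P' := P / g
  set Q' := Q / g
  rw [hQ', eval_mul, mul_ne_zero_iff] at hz
  rw [hP, hQ', eval_mul, eval_mul, mul_div_mul_left _ _ hz.1]
  exact ⟨hz.2, rfl⟩

theorem eventually_nhdsNE_eval_ne_zero [Field K] [TopologicalSpace K] [T1Space K] {Q : K[X]}
    (hQ : Q ≠ 0) (w : K) : ∀ᶠ u in 𝓝[≠] w, Q.eval u ≠ 0 :=
  nhdsNE_le_cofinite w <| eventually_cofinite.2 <| by simpa using finite_setOfPred_isRoot hQ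

end Polynomial

theorem Complex.re_nonneg_of_eventually_re_pos {f : ℂ → ℂ} {w : ℂ} (hf : ContinuousAt f w)
    (hw : 0 ≤ w.re) (h : ∀ᶠ u in 𝓝[≠] w, 0 < u.re → 0 < (f u).re) : 0 ≤ (f w).re := by
  have hpath : Tendsto (fun t : ℝ ↦ w + t) (𝓝[>] 0) (𝓝[≠] w) := by
    refine tendsto_nhdsWithin_of_tendsto_nhds_of_eventually_within _ ?_ ?_
    · exact (Continuous.tendsto' (by fun_prop) 0 w (by simp)).mono_left nhdsWithin_le_nhds
    · filter_upwards [self_mem_nhdsWithin] with t (ht : 0 < t)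
      simpa using ht.ne'
  refine ge_of_tendsto ((continuous_re.tendsto _).comp
    (hf.tendsto.comp (hpath.mono_right nhdsWithin_le_nhds))) ?_
  filter_upwards [hpath.eventually h, self_mem_nhdsWithin] with t ht (htpos : 0 < t)
  exact (ht (by simp; linarith)).le

theorem Complex.re_pos_of_odd_of_eq_one {P Q : ℂ[X]} (hQ : Q ≠ 0) {C : ℂ → ℂ}
    (hC : ∀ z, Q.eval z ≠ 0 → C z = P.eval z / Q.eval z)
    (hodd : ∀ z, Q.eval z ≠ 0 → Q.eval (-z) ≠ 0 → C (-z) = -C z)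
    (hpos : ∀ z, 0 < z.re → Q.eval z ≠ 0 → 0 < (C z).re) {z : ℂ} (hz : Q.eval z ≠ 0)
    (hCz : C z = 1) : 0 < z.re := by
  obtain ⟨P', Q', hcop, hred⟩ := exists_isCoprime_eval_div_eq hQ
  have hCred u (hu : Q.eval u ≠ 0) : C u = P'.eval u / Q'.eval u := (hC u hu).trans (hred u hu).2
  have hodd' : IsOddFraction P' Q' := isOddFraction_of_eval hQ fun u hu hu' ↦ by
    have := hodd u hu hu'
    rw [hCred u hu, hCred _ hu'] at this
    field_simp [(hred u hu).1, (hred _ hu').1] at this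
    linear_combination this
  have hQ'z := (hred z hz).1
  have hQ'nz := hodd'.eval_neg_ne_zero hcop hQ'z
  have hneg : P'.eval (-z) / Q'.eval (-z) = -1 := by
    rw [hodd'.eval_neg_div hQ'z hQ'nz, ← hCred z hz, hCz]
  by_contra! hre
  have hcont : ContinuousAt (fun u ↦ P'.eval u / Q'.eval u) (-z) :=
    P'.continuous.continuousAt.div Q'.continuous.continuousAt hQ'nz
  have := re_nonneg_of_eventually_re_pos hcont (by simpa using hre) <| by
    filter_upwards [eventually_nhdsNE_eval_ne_zero hQ (-z)] with u hu hre
    exact hCred u hu ▸ hpos u hre hu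
  norm_num [hneg] at this

/-- If `C(z)` is an odd rational function with real coefficients such that
`Re C(z) > 0` whenever `Re z > 0`, then every complex solution of `C(z) = 1`
satisfies `Re z > 0`. -/
theorem stmt_0 (p q : Polynomial ℝ) (hq : q ≠ 0) (C : ℂ → ℂ)
    (hC : ∀ z : ℂ, aeval z q ≠ 0 → C z = aeval z p / aeval z q)
    (hodd : ∀ z : ℂ, aeval z q ≠ 0 → aeval (-z) q ≠ 0 → C (-z) = - C z)
    (hpos : ∀ z : ℂ, 0 < z.re → aeval z q ≠ 0 → 0 < (C z).re) :
    ∀ z : ℂ, aeval z q ≠ 0 → C z = 1 → 0 < z.re := by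
  simp only [← eval_map_algebraMap] at hC hodd hpos ⊢
  exact fun z ↦ Complex.re_pos_of_odd_of_eq_one
    ((Polynomial.map_ne_zero_iff (algebraMap ℝ ℂ).injective).2 hq) hC hodd hpos
end

section
/- If C(z) is an odd rational function with real coefficients such that Re C(z) > 0 whenever Re z > 0, then every zero z₀ ∈ ℂ of C lies on the imaginary axis (Re z₀ = 0) and satisfies C'(z₀) > 0 (in particular C'(z₀) is a positive real number). -/
/-!
Near a zero `z₀` with `q z₀ ≠ 0` write `C z = (z - z₀) ^ n • g z` with `g z₀ ≠ 0`. If `Re z₀ > 0`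
this contradicts `Re C z₀ > 0`. If `Re z₀ < 0`, oddness makes `Re C < 0` on a punctured
neighbourhood of `z₀`, which the open mapping theorem forbids. If `Re z₀ = 0`, approaching `z₀`
along the rays `z₀ + ε w` with `Re w > 0` gives `Re (wⁿ g z₀) ≥ 0` for all such `w`; for `n ≥ 2` the
`n`-th powers of the closed right half-plane cover `ℂ`, which forces `g z₀ = 0`. Hence `n = 1`, and
`C' z₀ = g z₀` is a positive real.
-/

open Polynomial Filter Topology Complex Set ComplexConjugate

theorem Polynomial.finite_setOf_aeval_eq_zero {K A : Type*} [Field K] [CommRing A] [IsDomain A]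
    [Algebra K A] {q : K[X]} (hq : q ≠ 0) : {x : A | aeval x q = 0}.Finite := by
  simpa [IsRoot, eval_map_algebraMap] using
    finite_setOfPred_isRoot ((Polynomial.map_ne_zero_iff (algebraMap K A).injective).2 hq)

theorem Polynomial.not_eventually_aeval_div_eq_zero {p q : ℝ[X]} (hp : p ≠ 0) {z₀ : ℂ}
    (hq : aeval z₀ q ≠ 0) : ¬∀ᶠ z in 𝓝 z₀, aeval z p / aeval z q = 0 := by
  intro h
  have hp_zero : {z : ℂ | aeval z p = 0} ∈ 𝓝 z₀ := by
    filter_upwards [h, q.continuous_aeval.continuousAt.eventually_ne hq] with z hz hqz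
    exact (div_eq_zero_iff.1 hz).resolve_right hqz
  exact infinite_of_mem_nhds z₀ hp_zero (finite_setOf_aeval_eq_zero hp)

theorem Complex.eq_zero_of_forall_re_mul_nonneg {a : ℂ} (h : ∀ u : ℂ, 0 ≤ (u * a).re) :
    a = 0 := by
  have := h (-conj a)
  rw [neg_mul, conj_mul', neg_re, ← ofReal_pow, ofReal_re] at this
  simpa using this

theorem Complex.exists_re_nonneg_pow_eq {n : ℕ} (hn : 2 ≤ n) (u : ℂ) :
    ∃ w : ℂ, 0 ≤ w.re ∧ w ^ n = u := by
  refine ⟨u ^ (n⁻¹ : ℂ), ?_, cpow_nat_inv_pow u (by omega)⟩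
  rcases eq_or_ne u 0 with rfl | hu
  · simp [zero_cpow (inv_ne_zero (Nat.cast_ne_zero.2 (by omega : n ≠ 0)))]
  have him : (log u * (n : ℂ)⁻¹).im = arg u / n := by
    rw [← ofReal_natCast, ← ofReal_inv, mul_im, ofReal_re, ofReal_im, log_im]
    ring
  have hpi : |arg u / n| ≤ Real.pi / 2 := by
    have h2 : (2 : ℝ) ≤ n := by exact_mod_cast hn
    rw [abs_div, Nat.abs_cast, div_le_iff₀ (by positivity)]
    calc |arg u| ≤ Real.pi := abs_arg_le_pi u
      _ ≤ Real.pi / 2 * n := by nlinarith [mul_nonneg Real.pi_pos.le (sub_nonneg.2 h2)]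
  rw [cpow_def_of_ne_zero hu, exp_re, him]
  exact mul_nonneg (Real.exp_pos _).le (Real.cos_nonneg_of_neg_pi_div_two_le_of_le
    (abs_le.1 hpi).1 (abs_le.1 hpi).2)

theorem Complex.eq_one_and_re_pos_of_forall_re_pow_mul_nonneg {n : ℕ} (hn : n ≠ 0) {a : ℂ}
    (ha : a ≠ 0) (h : ∀ w : ℂ, 0 < w.re → 0 ≤ (w ^ n * a).re) :
    n = 1 ∧ 0 < a.re ∧ a.im = 0 := by
  have h' : ∀ w : ℂ, 0 ≤ w.re → 0 ≤ (w ^ n * a).re := by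
    have : closure {w : ℂ | 0 < w.re} ⊆ {w : ℂ | 0 ≤ (w ^ n * a).re} :=
      closure_minimal h (isClosed_le continuous_const (by fun_prop))
    simpa using this
  obtain rfl : n = 1 := by
    by_contra hn1
    refine ha (eq_zero_of_forall_re_mul_nonneg fun u => ?_)
    obtain ⟨w, hw, rfl⟩ := exists_re_nonneg_pow_eq (by omega : 2 ≤ n) u
    exact h' w hw
  have h1 := h' 1
  have hI := h' I
  have hnI := h' (-I)
  simp only [one_re, zero_le_one, pow_one, one_mul, I_re, le_refl, I_mul_re, neg_re, neg_zero,
    neg_mul, neg_neg, forall_const] at h1 hI hnI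
  have him : a.im = 0 := by linarith
  refine ⟨rfl, h1.lt_of_ne fun hre => ha (Complex.ext hre.symm him), him⟩

theorem tendsto_add_ofReal_mul_nhdsGT (z₀ w : ℂ) :
    Tendsto (fun ε : ℝ => z₀ + ε * w) (𝓝[>] 0) (𝓝 z₀) := by
  have : Continuous fun ε : ℝ => z₀ + ε * w := by fun_prop
  simpa using (this.tendsto 0).mono_left nhdsWithin_le_nhds

theorem re_pow_mul_nonneg_of_eventually_re_nonneg {f g : ℂ → ℂ} {z₀ w : ℂ} {n : ℕ}
    (hg : ContinuousAt g z₀) (hfg : ∀ᶠ z in 𝓝 z₀, f z = (z - z₀) ^ n • g z)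
    (hf : ∀ᶠ ε : ℝ in 𝓝[>] 0, 0 ≤ (f (z₀ + ε * w)).re) : 0 ≤ (w ^ n * g z₀).re := by
  have hray := tendsto_add_ofReal_mul_nhdsGT z₀ w
  have hlim : Tendsto (fun ε : ℝ => (w ^ n * g (z₀ + ε * w)).re) (𝓝[>] 0)
      (𝓝 (w ^ n * g z₀).re) :=
    (continuous_re.tendsto _).comp ((hg.tendsto.comp hray).const_mul _)
  refine ge_of_tendsto hlim ?_
  filter_upwards [hf, hray.eventually hfg, self_mem_nhdsWithin] with ε hε hfε (hε0 : 0 < ε)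
  rw [hfε, add_sub_cancel_left, smul_eq_mul, mul_pow, mul_assoc, ← ofReal_pow,
    re_ofReal_mul] at hε
  exact (mul_nonneg_iff_of_pos_left (pow_pos hε0 n)).1 hε

theorem AnalyticAt.frequently_re_pos {f : ℂ → ℂ} {z₀ : ℂ} (hf : AnalyticAt ℂ f z₀)
    (h0 : f z₀ = 0) (hne : ¬∀ᶠ z in 𝓝 z₀, f z = 0) : ∃ᶠ z in 𝓝[≠] z₀, 0 < (f z).re := by
  intro h
  have hle : ∀ᶠ z in 𝓝 z₀, (f z).re ≤ 0 := by
    filter_upwards [eventually_nhdsWithin_iff.1 h] with z hz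
    rcases eq_or_ne z z₀ with rfl | hz0
    · simp [h0]
    · exact not_lt.1 (hz hz0)
  have hmap : 𝓝 0 ≤ map f (𝓝 z₀) := by
    simpa [h0] using
      hf.eventually_constant_or_nhds_le_map_nhds.resolve_left (by simpa [h0] using hne)
  have : {u : ℂ | u.re ≤ 0} ∈ 𝓝 0 := hmap hle
  simpa using mem_interior_iff_mem_nhds.2 this

theorem AnalyticAt.deriv_re_pos_of_re_nonneg {f : ℂ → ℂ} {z₀ : ℂ} (hf : AnalyticAt ℂ f z₀)
    (h0 : f z₀ = 0) (hne : ¬∀ᶠ z in 𝓝 z₀, f z = 0) (hre : z₀.re = 0)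
    (hpos : ∀ᶠ z in 𝓝 z₀, 0 < z.re → 0 ≤ (f z).re) :
    0 < (deriv f z₀).re ∧ (deriv f z₀).im = 0 := by
  obtain ⟨n, g, hg, hgz, hfg⟩ := hf.exists_eventuallyEq_pow_smul_nonzero_iff.2 hne
  have hn : n ≠ 0 := by
    rintro rfl
    exact hgz (by simpa [h0, eq_comm] using hfg.self_of_nhds)
  have hdir : ∀ w : ℂ, 0 < w.re → 0 ≤ (w ^ n * g z₀).re := fun w hw =>
    re_pow_mul_nonneg_of_eventually_re_nonneg hg.continuousAt hfg <| by
      filter_upwards [(tendsto_add_ofReal_mul_nhdsGT z₀ w).eventually hpos,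
        self_mem_nhdsWithin] with ε hε (hε0 : 0 < ε)
      exact hε (by simpa [hre] using mul_pos hε0 hw)
  obtain ⟨rfl, hgre, hgim⟩ := eq_one_and_re_pos_of_forall_re_pow_mul_nonneg hn hgz hdir
  have hderiv : HasDerivAt f (g z₀) z₀ := by
    have := ((hasDerivAt_id' z₀).sub_const z₀).smul hg.differentiableAt.hasDerivAt
    rw [sub_self, zero_smul, one_smul, zero_add] at this
    exact this.congr_of_eventuallyEq (hfg.mono fun z hz => by rw [hz, pow_one]; rfl)
  rw [hderiv.deriv]
  exact ⟨hgre, hgim⟩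

theorem eventually_re_neg_of_odd {q : ℝ[X]} (hq : q ≠ 0) {C : ℂ → ℂ}
    (hodd : ∀ z : ℂ, aeval z q ≠ 0 → aeval (-z) q ≠ 0 → C (-z) = - C z)
    (hpos : ∀ z : ℂ, 0 < z.re → aeval z q ≠ 0 → 0 < (C z).re) {z₀ : ℂ} (hre : z₀.re < 0)
    (hqz₀ : aeval z₀ q ≠ 0) : ∀ᶠ z in 𝓝[≠] z₀, (C z).re < 0 := by
  have hre_near : ∀ᶠ z in 𝓝 z₀, z.re < 0 :=
    continuous_re.continuousAt.eventually_lt continuousAt_const hre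
  have hq_near : ∀ᶠ z in 𝓝 z₀, aeval z q ≠ 0 := q.continuous_aeval.continuousAt.eventually_ne hqz₀
  have hq_neg : {z : ℂ | aeval (-z) q = 0}.Finite :=
    (finite_setOf_aeval_eq_zero hq).preimage neg_injective.injOn
  filter_upwards [nhdsWithin_le_nhds hre_near, nhdsWithin_le_nhds hq_near,
    nhdsNE_of_nhdsNE_sdiff_finite univ_mem hq_neg.to_subtype] with z hzre hqz ⟨_, hqnz⟩
  simpa [hodd z hqz hqnz] using hpos (-z) (by simpa using hzre) hqnz

/-- If `C(z) = p(z)/q(z)` is an odd nonzero rational function with real coefficients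
such that `Re C(z) > 0` whenever `Re z > 0`, then every zero `z₀` of `C` lies on the
imaginary axis and `C'(z₀)` is a positive real number. -/
theorem stmt_2 (p q : Polynomial ℝ) (hp : p ≠ 0) (hq : q ≠ 0) (C : ℂ → ℂ)
    (hC : ∀ z : ℂ, C z = aeval z p / aeval z q)
    (hodd : ∀ z : ℂ, aeval z q ≠ 0 → aeval (-z) q ≠ 0 → C (-z) = - C z)
    (hpos : ∀ z : ℂ, 0 < z.re → aeval z q ≠ 0 → 0 < (C z).re) :
    ∀ z : ℂ, aeval z q ≠ 0 → C z = 0 →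
      z.re = 0 ∧ 0 < (deriv C z).re ∧ (deriv C z).im = 0 := by
  intro z₀ hqz₀ hCz₀
  have hf : AnalyticAt ℂ C z₀ :=
    ((analyticAt_id.aeval_polynomial p).div (analyticAt_id.aeval_polynomial q) hqz₀).congr
      (.of_forall fun z => (hC z).symm)
  have hne : ¬∀ᶠ z in 𝓝 z₀, C z = 0 := fun h =>
    not_eventually_aeval_div_eq_zero hp hqz₀ (h.mono fun z hz => hC z ▸ hz)
  have hq_near : ∀ᶠ z in 𝓝 z₀, aeval z q ≠ 0 :=
    q.continuous_aeval.continuousAt.eventually_ne hqz₀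
  have hre : z₀.re = 0 := by
    rcases lt_trichotomy z₀.re 0 with hlt | heq | hgt
    · obtain ⟨z, hz, hz'⟩ := ((hf.frequently_re_pos hCz₀ hne).and_eventually
        (eventually_re_neg_of_odd hq hodd hpos hlt hqz₀)).exists
      exact absurd hz (not_lt.2 hz'.le)
    · exact heq
    · simpa [hCz₀] using hpos z₀ hgt hqz₀
  refine ⟨hre, hf.deriv_re_pos_of_re_nonneg hCz₀ hne hre ?_⟩
  filter_upwards [hq_near] with z hqz hzre using (hpos z hzre hqz).le
end

section
/- Let n ≥ 0, d₁ > 0, and a₁ > b₁ > a₂ > ... > a_n > b_n ≥ 0 be real numbers. Define C(z) = d₁ z · Π_{k=1}^n (z² + a_k²)/(z² + b_k²). Then Re z > 0 implies Re C(z) > 0. -/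
/-! With `w = z²`, interlacing makes `∏ₖ (w + aₖ²)/(w + bₖ²) = 1 + ∑ⱼ cⱼ/(w + bⱼ²)` with every
`cⱼ > 0`: adding one factor at a time, each partial fraction of the previous product splits
over the new pole with positive weights. Hence `C(z) = d₁ z + ∑ⱼ d₁ cⱼ z/(z² + bⱼ²)`, and
`z/(z² + β) = (z + β z⁻¹)⁻¹` has positive real part when `Re z > 0` and `β ≥ 0`. -/

open Finset

namespace Complex

lemma re_inv_pos {w : ℂ} (hw : 0 < w.re) : 0 < w⁻¹.re := by
  rw [inv_re]
  exact div_pos hw (normSq_pos.2 fun h => by simp [h] at hw)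

lemma re_div_sq_add_ofReal_pos {z : ℂ} (hz : 0 < z.re) {β : ℝ} (hβ : 0 ≤ β) :
    0 < (z / (z ^ 2 + β)).re := by
  have hz0 : z ≠ 0 := fun h => by simp [h] at hz
  have h : z / (z ^ 2 + β) = (z + β * z⁻¹)⁻¹ := by
    rw [← inv_div]
    congr 1
    field_simp
  rw [h]
  refine re_inv_pos ?_
  rw [add_re, re_ofReal_mul]
  exact add_pos_of_pos_of_nonneg hz (mul_nonneg hβ (re_inv_pos hz).le)

lemma sq_add_ofReal_ne_zero {z : ℂ} (hz : 0 < z.re) {β : ℝ} (hβ : 0 ≤ β) :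
    z ^ 2 + β ≠ 0 := fun h => by
  simpa [h] using re_div_sq_add_ofReal_pos hz hβ

end Complex

lemma div_mul_div_eq_div_add_div {K : Type*} [Field K] {w A B β : K} (c : K)
    (hβ : w + β ≠ 0) (hB : w + B ≠ 0) (hβB : β - B ≠ 0) :
    c / (w + β) * ((w + A) / (w + B)) =
      c * (A - β) / (B - β) / (w + β) + c / (β - B) * (A - B) / (w + B) := by
  have hBβ : B - β ≠ 0 := fun h => hβB (by linear_combination -h)
  field_simp
  ring

theorem exists_prod_div_eq_one_add_sum {n : ℕ} (α β : Fin n → ℝ)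
    (hβα : ∀ k, β k < α k) (hαβ : ∀ i j, i < j → α j < β i) :
    ∃ c : Fin n → ℝ, (∀ j, 0 < c j) ∧ ∀ w : ℂ, (∀ k, w + β k ≠ 0) →
      ∏ k, (w + α k) / (w + β k) = 1 + ∑ j, (c j : ℂ) / (w + β j) := by
  induction n with
  | zero => exact ⟨0, fun j => j.elim0, fun w _ => by simp⟩
  | succ n ih =>
    obtain ⟨c, hc, hprod⟩ := ih (fun k => α k.castSucc) (fun k => β k.castSucc) (fun k => hβα _)
      (fun i j hij => hαβ _ _ (Fin.castSucc_lt_castSucc_iff.2 hij))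
    set A := α (Fin.last n) with hA
    set B := β (Fin.last n) with hB
    have hBA : B < A := hβα _
    have hAβ : ∀ j : Fin n, A < β j.castSucc := fun j => hαβ _ _ (Fin.castSucc_lt_last j)
    refine ⟨Fin.snoc (fun j => c j * (A - β j.castSucc) / (B - β j.castSucc))
      ((A - B) * (1 + ∑ j, c j / (β j.castSucc - B))), ?_, ?_⟩
    · refine Fin.lastCases ?_ fun j => ?_
      · simp only [Fin.snoc_last]
        refine mul_pos (sub_pos.2 hBA) (add_pos_of_pos_of_nonneg one_pos ?_)
        exact sum_nonneg fun j _ => (div_pos (hc j) (sub_pos.2 (hBA.trans (hAβ j)))).le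
      · simp only [Fin.snoc_castSucc]
        exact div_pos_of_neg_of_neg (mul_neg_of_pos_of_neg (hc j) (sub_neg.2 (hAβ j)))
          (sub_neg.2 (hBA.trans (hAβ j)))
    · intro w hw
      have hsplit : ∀ j : Fin n, (c j : ℂ) / (w + β j.castSucc) * ((w + A) / (w + B)) =
          ((c j * (A - β j.castSucc) / (B - β j.castSucc) : ℝ) : ℂ) / (w + β j.castSucc) +
            ((c j / (β j.castSucc - B) : ℝ) : ℂ) * (A - B) / (w + B) := fun j => by
        push_cast
        refine div_mul_div_eq_div_add_div _ (hw _) (hw _) ?_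
        exact_mod_cast (sub_pos.2 (hBA.trans (hAβ j))).ne'
      have hlast : (w + A) / (w + B) = 1 + ((A - B : ℝ) : ℂ) / (w + B) := by
        rw [one_add_div (hw (Fin.last n))]
        congr 1
        push_cast
        ring
      simp only [Fin.prod_univ_castSucc, Fin.sum_univ_castSucc, Fin.snoc_castSucc, Fin.snoc_last,
        ← hA, ← hB]
      rw [hprod w (fun k => hw _), add_mul, one_mul, sum_mul]
      simp only [hsplit, sum_add_distrib, ← sum_div, ← sum_mul]
      rw [hlast]
      push_cast
      ring

lemma lt_of_interlacing {n : ℕ} {a b : Fin n → ℝ} (hab : ∀ k : Fin n, b k < a k)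
    (hba : ∀ (k : ℕ) (h : k + 1 < n), a ⟨k + 1, h⟩ < b ⟨k, Nat.lt_of_succ_lt h⟩)
    {i j : Fin n} (hij : i < j) : a j < b i := by
  obtain ⟨i, hi⟩ := i
  obtain ⟨j, hj⟩ := j
  change i + 1 ≤ j at hij
  induction j, hij using Nat.le_induction with
  | base => exact hba i hj
  | succ j hij ih =>
    calc a ⟨j + 1, hj⟩ < b ⟨j, _⟩ := hba j hj
      _ < a ⟨j, _⟩ := hab _
      _ < b ⟨i, hi⟩ := ih (Nat.lt_of_succ_lt hj)

/-- Let `n ≥ 0`, `d₁ > 0` and `a₁ > b₁ > a₂ > ⋯ > a_n > b_n ≥ 0` be real numbers.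
Then `C(z) = d₁ z ∏ₖ (z² + aₖ²)/(z² + bₖ²)` maps the open right half-plane into
itself. -/
theorem stmt_4 (n : ℕ) (d₁ : ℝ) (hd : 0 < d₁) (a b : Fin n → ℝ)
    (hab : ∀ k : Fin n, b k < a k)
    (hba : ∀ (k : ℕ) (h : k + 1 < n), a ⟨k + 1, h⟩ < b ⟨k, Nat.lt_of_succ_lt h⟩)
    (hb0 : ∀ k : Fin n, 0 ≤ b k) :
    ∀ z : ℂ, 0 < z.re →
      0 < ((d₁ : ℂ) * z *
        ∏ k : Fin n, (z ^ 2 + (a k : ℂ) ^ 2) / (z ^ 2 + (b k : ℂ) ^ 2)).re := by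
  intro z hz
  obtain ⟨c, hc, hprod⟩ := exists_prod_div_eq_one_add_sum (fun k => a k ^ 2) (fun k => b k ^ 2)
    (fun k => pow_lt_pow_left₀ (hab k) (hb0 k) two_ne_zero)
    (fun i j hij => pow_lt_pow_left₀ (lt_of_interlacing hab hba hij)
      ((hb0 j).trans (hab j).le) two_ne_zero)
  have hsq : ∀ k, 0 ≤ b k ^ 2 := fun k => sq_nonneg _
  simp only [Complex.ofReal_pow] at hprod
  rw [hprod (z ^ 2) fun k => by exact_mod_cast Complex.sq_add_ofReal_ne_zero hz (hsq k),
    mul_add, mul_one, mul_sum, Complex.add_re, Complex.re_sum, Complex.re_ofReal_mul]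
  refine add_pos_of_pos_of_nonneg (mul_pos hd hz) (sum_nonneg fun j _ => ?_)
  rw [mul_assoc, Complex.re_ofReal_mul, mul_div_left_comm, Complex.re_ofReal_mul]
  have := Complex.re_div_sq_add_ofReal_pos hz (hsq j)
  push_cast at this
  exact (mul_pos hd (mul_pos (hc j) this)).le
end

section
/- Let C(z) = d₁ z · Π_{k=1}^n (z² + a_k²)/(z² + b_k²) with d₁ > 0 and a₁ > b₁ > a₂ > ... > b_n ≥ 0, b_n ≠ 0, and define r(z) = 1/(C(z) − d₁ z). Then every zero of r lies on the imaginary axis; specifically the zeros are ±i b₁, ..., ±i b_n, and r'(±i b_l) > 0 for each l. -/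
/-!
At a pole `z₀ = ±i bₗ` of `C`, the factor `z² + bₗ² = (z - z₀)(z + z₀)` shows that
`(z - z₀)(C(z) - d₁z)` tends to `ρ = d₁(aₗ² - bₗ²)/2 · ∏_{k≠l} (aₖ² - bₗ²)/(bₖ² - bₗ²)`.
Hence `r = 1/(C - d₁z)` vanishes at `z₀` and its slope there tends to `1/ρ`, so `r'(z₀) = 1/ρ`.
Interlacing makes every factor of `ρ` positive: for `k < l` both `aₖ² - bₗ²` and `bₖ² - bₗ²` are
positive, for `k > l` both are negative.
-/

open Complex Finset Filter Topology

section Interlacing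

variable {n : ℕ} {a b : Fin n → ℝ}

theorem a_lt_b_of_lt (hba : ∀ (k : ℕ) (h : k + 1 < n), a ⟨k + 1, h⟩ < b ⟨k, Nat.lt_of_succ_lt h⟩)
    (hab : ∀ k : Fin n, b k < a k) {i j : Fin n} (hij : i < j) : a j < b i := by
  suffices h : ∀ m (hm : i.val + m + 1 < n), a ⟨i + m + 1, hm⟩ < b i by
    obtain ⟨m, hm⟩ := Nat.exists_eq_add_of_lt hij
    simpa [← hm] using h m (hm ▸ j.isLt)
  intro m hm
  induction m with
  | zero => exact hba i hm
  | succ m ih =>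
    have hm' : i.val + m + 1 < n := by omega
    calc a ⟨i + (m + 1) + 1, hm⟩ < b ⟨i + m + 1, hm'⟩ := hba _ hm
      _ < a ⟨i + m + 1, hm'⟩ := hab _
      _ < b i := ih hm'

theorem interlacing_ratio_pos
    (hba : ∀ (k : ℕ) (h : k + 1 < n), a ⟨k + 1, h⟩ < b ⟨k, Nat.lt_of_succ_lt h⟩)
    (hab : ∀ k : Fin n, b k < a k) (hb0 : ∀ k : Fin n, 0 < b k) {k l : Fin n} (hkl : k ≠ l) :
    0 < (a k ^ 2 - b l ^ 2) / (b k ^ 2 - b l ^ 2) := by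
  have := hab k
  have := hb0 k
  have := hb0 l
  rcases hkl.lt_or_gt with h | h
  · have := a_lt_b_of_lt hba hab h
    have := hab l
    apply div_pos <;> nlinarith
  · have := a_lt_b_of_lt hba hab h
    apply div_pos_of_neg_of_neg <;> nlinarith

end Interlacing

theorem zero_and_hasDerivAt_of_tendsto_sub_mul {𝕜 : Type*} [NontriviallyNormedField 𝕜]
    {r g : 𝕜 → 𝕜} {z₀ c : 𝕜} (hr : ∀ᶠ z in 𝓝[≠] z₀, r z = (g z)⁻¹)
    (hg : Tendsto (fun z => (z - z₀) * g z) (𝓝[≠] z₀) (𝓝 c)) (hc : c ≠ 0)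
    (hcont : ContinuousAt r z₀) : r z₀ = 0 ∧ HasDerivAt r c⁻¹ z₀ := by
  have hzero : r z₀ = 0 := by
    have hsub : Tendsto (fun z => z - z₀) (𝓝[≠] z₀) (𝓝 0) :=
      tendsto_sub_nhds_zero_iff.2 nhdsWithin_le_nhds
    have hlim : Tendsto r (𝓝[≠] z₀) (𝓝 0) := by
      simpa using (hsub.mul (hg.inv₀ hc)).congr' <| by
        filter_upwards [hr, self_mem_nhdsWithin] with z hz hne
        rw [hz, mul_inv, ← mul_assoc, mul_inv_cancel₀ (sub_ne_zero.2 hne), one_mul]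
    exact tendsto_nhds_unique (hcont.tendsto.mono_left nhdsWithin_le_nhds) hlim
  refine ⟨hzero, hasDerivAt_iff_tendsto_slope.2 ((hg.inv₀ hc).congr' ?_)⟩
  filter_upwards [hr] with z hz
  rw [slope_def_field, hzero, sub_zero, hz, mul_inv, div_eq_mul_inv, mul_comm]

theorem eventually_sq_add_sq_ne_zero (b z₀ : ℂ) : ∀ᶠ z in 𝓝[≠] z₀, z ^ 2 + b ^ 2 ≠ 0 := by
  filter_upwards [nhdsNE_le_cofinite z₀ (eventually_cofinite_ne (I * b)),
    nhdsNE_le_cofinite z₀ (eventually_cofinite_ne (-(I * b)))] with z h₁ h₂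
  have hfac : z ^ 2 + b ^ 2 = (z - I * b) * (z - -(I * b)) := by
    linear_combination b ^ 2 * I_sq
  rw [hfac]
  exact mul_ne_zero (sub_ne_zero.2 h₁) (sub_ne_zero.2 h₂)

theorem tendsto_sub_mul_rational {n : ℕ} (d : ℂ) (a b : Fin n → ℂ) (l : Fin n) {z₀ : ℂ}
    (hz₀ : z₀ ^ 2 = -b l ^ 2) (hz₀ne : z₀ ≠ 0) (hsimple : ∀ k ≠ l, z₀ ^ 2 + b k ^ 2 ≠ 0) :
    Tendsto (fun z => (z - z₀) *
        (d * z * ∏ k, (z ^ 2 + a k ^ 2) / (z ^ 2 + b k ^ 2) - d * z)) (𝓝[≠] z₀)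
      (𝓝 (d * (z₀ ^ 2 + a l ^ 2) / 2 *
        ∏ k ∈ univ.erase l, (z₀ ^ 2 + a k ^ 2) / (z₀ ^ 2 + b k ^ 2))) := by
  have hP : ContinuousAt (fun z => ∏ k ∈ univ.erase l, (z ^ 2 + a k ^ 2) / (z ^ 2 + b k ^ 2)) z₀ := by
    refine tendsto_finsetProd _ fun k hk => ?_
    exact ((continuous_pow 2).add continuous_const).continuousAt.div
      ((continuous_pow 2).add continuous_const).continuousAt (hsimple k (ne_of_mem_erase hk))
  have hz₀add : z₀ + z₀ ≠ 0 := by simpa [← two_mul] using hz₀ne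
  have hF : ContinuousAt (fun z => d * z * ((z ^ 2 + a l ^ 2) / (z + z₀) *
      ∏ k ∈ univ.erase l, (z ^ 2 + a k ^ 2) / (z ^ 2 + b k ^ 2) - (z - z₀))) z₀ :=
    (continuousAt_const.mul continuousAt_id).mul
      (((((continuous_pow 2).add continuous_const).continuousAt.div
        (continuousAt_id.add continuousAt_const) hz₀add).mul hP).sub
        (continuousAt_id.sub continuousAt_const))
  have hFz₀ : d * (z₀ ^ 2 + a l ^ 2) / 2 *
      ∏ k ∈ univ.erase l, (z₀ ^ 2 + a k ^ 2) / (z₀ ^ 2 + b k ^ 2) =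
      d * z₀ * ((z₀ ^ 2 + a l ^ 2) / (z₀ + z₀) *
        ∏ k ∈ univ.erase l, (z₀ ^ 2 + a k ^ 2) / (z₀ ^ 2 + b k ^ 2) - (z₀ - z₀)) := by
    field_simp
    ring
  rw [hFz₀]
  refine (hF.tendsto.mono_left nhdsWithin_le_nhds).congr' ?_
  filter_upwards [eventually_sq_add_sq_ne_zero (b l) z₀, self_mem_nhdsWithin] with z hz hne
  have hfac : z ^ 2 + b l ^ 2 = (z - z₀) * (z + z₀) := by linear_combination hz₀
  have hzadd : z + z₀ ≠ 0 := right_ne_zero_of_mul (hfac ▸ hz)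
  have hzsub : z - z₀ ≠ 0 := sub_ne_zero.2 hne
  rw [← mul_prod_erase univ _ (mem_univ l), hfac]
  field_simp

theorem zero_and_deriv_pos_at_pole {n : ℕ} {d₁ : ℝ} (hd : 0 < d₁) {a b : Fin n → ℝ}
    (hab : ∀ k : Fin n, b k < a k)
    (hba : ∀ (k : ℕ) (h : k + 1 < n), a ⟨k + 1, h⟩ < b ⟨k, Nat.lt_of_succ_lt h⟩)
    (hb0 : ∀ k : Fin n, 0 < b k) {r : ℂ → ℂ}
    (hr : ∀ z : ℂ, (∏ k : Fin n, (z ^ 2 + (b k : ℂ) ^ 2)) ≠ 0 →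
      r z = ((d₁ : ℂ) * z * ∏ k : Fin n, (z ^ 2 + (a k : ℂ) ^ 2) / (z ^ 2 + (b k : ℂ) ^ 2)
        - (d₁ : ℂ) * z)⁻¹)
    (l : Fin n) {z₀ : ℂ} (hz₀ : z₀ ^ 2 = -(b l : ℂ) ^ 2) (hcont : ContinuousAt r z₀) :
    r z₀ = 0 ∧ 0 < (deriv r z₀).re ∧ (deriv r z₀).im = 0 := by
  set ρ : ℝ := d₁ * (a l ^ 2 - b l ^ 2) / 2 *
    ∏ k ∈ univ.erase l, (a k ^ 2 - b l ^ 2) / (b k ^ 2 - b l ^ 2)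
  have hρ : 0 < ρ := by
    have hl : 0 < a l ^ 2 - b l ^ 2 := by nlinarith [hab l, hb0 l]
    exact mul_pos (by positivity) <| prod_pos fun k hk =>
      interlacing_ratio_pos hba hab hb0 (ne_of_mem_erase hk)
  have hsimple : ∀ k ≠ l, z₀ ^ 2 + (b k : ℂ) ^ 2 ≠ 0 := by
    intro k hk h
    have hpos := interlacing_ratio_pos hba hab hb0 hk
    have hden : b k ^ 2 - b l ^ 2 = 0 := by exact_mod_cast (by push_cast; linear_combination h - hz₀ :
      ((b k ^ 2 - b l ^ 2 : ℝ) : ℂ) = 0)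
    simp [hden] at hpos
  have hz₀ne : z₀ ≠ 0 := by
    rintro rfl
    have : (b l : ℂ) = 0 := by simpa using hz₀.symm
    exact (hb0 l).ne' (ofReal_eq_zero.1 this)
  have hc : (d₁ : ℂ) * (z₀ ^ 2 + (a l : ℂ) ^ 2) / 2 *
      ∏ k ∈ univ.erase l, (z₀ ^ 2 + (a k : ℂ) ^ 2) / (z₀ ^ 2 + (b k : ℂ) ^ 2) = ρ := by
    simp only [ρ, hz₀]
    push_cast
    congr 1
    · ring
    · exact prod_congr rfl fun k _ => by ring
  have hlim := tendsto_sub_mul_rational (d₁ : ℂ) (fun k => (a k : ℂ)) (fun k => (b k : ℂ)) l hz₀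
    hz₀ne hsimple
  rw [hc] at hlim
  have hr' : ∀ᶠ z in 𝓝[≠] z₀, r z = ((d₁ : ℂ) * z *
      ∏ k : Fin n, (z ^ 2 + (a k : ℂ) ^ 2) / (z ^ 2 + (b k : ℂ) ^ 2) - (d₁ : ℂ) * z)⁻¹ := by
    filter_upwards [eventually_all.2 fun k => eventually_sq_add_sq_ne_zero (b k) z₀] with z hz
    exact hr z (prod_ne_zero_iff.2 fun k _ => hz k)
  obtain ⟨hzero, hderiv⟩ :=
    zero_and_hasDerivAt_of_tendsto_sub_mul hr' hlim (ofReal_ne_zero.2 hρ.ne') hcont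
  rw [hderiv.deriv, ← ofReal_inv, ofReal_re, ofReal_im]
  exact ⟨hzero, inv_pos.2 hρ, rfl⟩

/-- Let `C(z) = d₁ z ∏ₖ (z² + aₖ²)/(z² + bₖ²)` with `d₁ > 0` and strictly interlacing
`a₁ > b₁ > a₂ > ⋯ > a_n > b_n > 0`, and let `r(z) = 1/(C(z) − d₁z)` (a rational
function, regular at `±i bₗ`).  Then every zero of `r` lies on the imaginary axis;
the points `±i b₁, …, ±i b_n` are zeros of `r`, and at each of them the derivative
`r'(±i bₗ)` is a positive real number. -/
theorem stmt_5 (n : ℕ) (d₁ : ℝ) (hd : 0 < d₁) (a b : Fin n → ℝ)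
    (hab : ∀ k : Fin n, b k < a k)
    (hba : ∀ (k : ℕ) (h : k + 1 < n), a ⟨k + 1, h⟩ < b ⟨k, Nat.lt_of_succ_lt h⟩)
    (hb0 : ∀ k : Fin n, 0 < b k)
    (r : ℂ → ℂ)
    (hr : ∀ z : ℂ, (∏ k : Fin n, (z ^ 2 + (b k : ℂ) ^ 2)) ≠ 0 →
      r z = ((d₁ : ℂ) * z * ∏ k : Fin n, (z ^ 2 + (a k : ℂ) ^ 2) / (z ^ 2 + (b k : ℂ) ^ 2)
        - (d₁ : ℂ) * z)⁻¹)
    (hdiff : ∀ l : Fin n, DifferentiableAt ℂ r (Complex.I * (b l : ℂ)) ∧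
      DifferentiableAt ℂ r (-(Complex.I * (b l : ℂ)))) :
    (∀ z : ℂ, (∏ k : Fin n, (z ^ 2 + (b k : ℂ) ^ 2)) ≠ 0 →
      ((d₁ : ℂ) * z * ∏ k : Fin n, (z ^ 2 + (a k : ℂ) ^ 2) / (z ^ 2 + (b k : ℂ) ^ 2)
        - (d₁ : ℂ) * z) ≠ 0 → r z = 0 → z.re = 0) ∧
    (∀ l : Fin n, r (Complex.I * (b l : ℂ)) = 0 ∧ r (-(Complex.I * (b l : ℂ))) = 0) ∧
    (∀ l : Fin n,
      0 < (deriv r (Complex.I * (b l : ℂ))).re ∧ (deriv r (Complex.I * (b l : ℂ))).im = 0 ∧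
      0 < (deriv r (-(Complex.I * (b l : ℂ)))).re ∧
        (deriv r (-(Complex.I * (b l : ℂ)))).im = 0) := by
  have hsq (l : Fin n) : (I * (b l : ℂ)) ^ 2 = -(b l : ℂ) ^ 2 := by
    rw [mul_pow, I_sq, neg_one_mul]
  have hplus (l : Fin n) := zero_and_deriv_pos_at_pole hd hab hba hb0 hr l (hsq l)
    (hdiff l).1.continuousAt
  have hminus (l : Fin n) := zero_and_deriv_pos_at_pole hd hab hba hb0 hr l
    (by rw [neg_sq, hsq l]) (hdiff l).2.continuousAt
  refine ⟨fun z hprod hne hz => absurd hz (hr z hprod ▸ inv_ne_zero hne),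
    fun l => ⟨(hplus l).1, (hminus l).1⟩,
    fun l => ⟨(hplus l).2.1, (hplus l).2.2, (hminus l).2.1, (hminus l).2.2⟩⟩
end

section
/- Suppose c > 0 and there exist positive rationals d₁, ..., d_m such that d₁c + 1/(d₂c + 1/(... + 1/(d_m c))) = 1. Then a unit square can be tiled by finitely many rectangles, each of ratio (horizontal side over vertical side) equal to c or 1/c. -/
/-- The continued fraction `d₁z + 1/(d₂z + 1/(⋯ + 1/(d_m z)))` (real version). -/
noncomputable def contFracR : List ℝ → ℝ → ℝ
  | [], _ => 0
  | [d], z => d * z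
  | d :: e :: rest, z => d * z + (contFracR (e :: rest) z)⁻¹

/-! The ratios `r` for which the rectangle `[0, r] × [0, 1]` can be tiled by rectangles of ratio
`c` or `c⁻¹` contain `c` and are closed under `r + s` (put two tiled rectangles side by side) and
under `r⁻¹` (transpose and rescale). Hence they contain `q * c = p * (n * c⁻¹)⁻¹` for every positive
rational `q = p / n`, and, unwinding the continued fraction from the inside, `d₁c + 1/(d₂c + ⋯)`.
When this value is `1` the rectangle is the unit square. -/

open Set

def HasRatioTiling (c : ℝ) (S : Set (ℝ × ℝ)) : Prop :=
  ∃ (N : ℕ) (x₁ x₂ y₁ y₂ : Fin N → ℝ),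
    (∀ j, x₁ j < x₂ j ∧ y₁ j < y₂ j) ∧
    (∀ j, (x₂ j - x₁ j) / (y₂ j - y₁ j) = c ∨ (x₂ j - x₁ j) / (y₂ j - y₁ j) = c⁻¹) ∧
    (∀ j k, j ≠ k →
      (Ioo (x₁ j) (x₂ j) ×ˢ Ioo (y₁ j) (y₂ j)) ∩ (Ioo (x₁ k) (x₂ k) ×ˢ Ioo (y₁ k) (y₂ k)) = ∅) ∧
    (⋃ j, Icc (x₁ j) (x₂ j) ×ˢ Icc (y₁ j) (y₂ j)) = S

theorem iUnion_fin_add {α : Type*} {m n : ℕ} (f : Fin (m + n) → Set α) :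
    ⋃ j, f j = (⋃ i, f (Fin.castAdd n i)) ∪ ⋃ i, f (Fin.natAdd m i) := by
  ext p
  simpa only [mem_iUnion, mem_union, not_forall, not_not, not_and_or] using
    (Fin.forall_fin_add fun j => p ∉ f j).not

theorem Ioo_prod_Ioo_subset_interior_iUnion {ι : Type*} (x₁ x₂ y₁ y₂ : ι → ℝ) (i : ι) :
    Ioo (x₁ i) (x₂ i) ×ˢ Ioo (y₁ i) (y₂ i) ⊆
      interior (⋃ j, Icc (x₁ j) (x₂ j) ×ˢ Icc (y₁ j) (y₂ j)) := by
  simpa only [interior_prod_eq, interior_Icc] using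
    interior_mono (subset_iUnion (fun j => Icc (x₁ j) (x₂ j) ×ˢ Icc (y₁ j) (y₂ j)) i)

namespace HasRatioTiling

variable {c : ℝ} {S T : Set (ℝ × ℝ)}

theorem box {a b a' b' : ℝ} (h : a < b) (h' : a' < b')
    (hratio : (b - a) / (b' - a') = c ∨ (b - a) / (b' - a') = c⁻¹) :
    HasRatioTiling c (Icc a b ×ˢ Icc a' b') :=
  ⟨1, fun _ => a, fun _ => b, fun _ => a', fun _ => b', fun _ => ⟨h, h'⟩, fun _ => hratio,
    fun j k hjk => absurd (Subsingleton.elim j k) hjk, iUnion_const _⟩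

theorem union (hS : HasRatioTiling c S) (hT : HasRatioTiling c T)
    (hST : Disjoint (interior S) (interior T)) : HasRatioTiling c (S ∪ T) := by
  obtain ⟨N, x₁, x₂, y₁, y₂, hlt, hratio, hdisj, rfl⟩ := hS
  obtain ⟨M, u₁, u₂, v₁, v₂, hlt', hratio', hdisj', rfl⟩ := hT
  refine ⟨N + M, Fin.append x₁ u₁, Fin.append x₂ u₂, Fin.append y₁ v₁, Fin.append y₂ v₂,
    ?_, ?_, ?_, ?_⟩
  · simpa only [Fin.forall_fin_add, Fin.append_left, Fin.append_right] using ⟨hlt, hlt'⟩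
  · simpa only [Fin.forall_fin_add, Fin.append_left, Fin.append_right] using ⟨hratio, hratio'⟩
  · refine Fin.addCases (fun i => Fin.addCases (fun k hik => ?_) (fun k _ => ?_))
      (fun i => Fin.addCases (fun k _ => ?_) (fun k hik => ?_)) <;>
      simp only [Fin.append_left, Fin.append_right]
    · exact hdisj i k (ne_of_apply_ne _ hik)
    · exact (hST.mono (Ioo_prod_Ioo_subset_interior_iUnion x₁ x₂ y₁ y₂ i)
        (Ioo_prod_Ioo_subset_interior_iUnion u₁ u₂ v₁ v₂ k)).inter_eq
    · exact (hST.symm.mono (Ioo_prod_Ioo_subset_interior_iUnion u₁ u₂ v₁ v₂ i)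
        (Ioo_prod_Ioo_subset_interior_iUnion x₁ x₂ y₁ y₂ k)).inter_eq
    · exact hdisj' i k (ne_of_apply_ne _ hik)
  · simp only [iUnion_fin_add, Fin.append_left, Fin.append_right]

theorem preimage_swap (h : HasRatioTiling c S) : HasRatioTiling c (Prod.swap ⁻¹' S) := by
  obtain ⟨N, x₁, x₂, y₁, y₂, hlt, hratio, hdisj, rfl⟩ := h
  refine ⟨N, y₁, y₂, x₁, x₂, fun j => (hlt j).symm, fun j => ?_, fun j k hjk => ?_, ?_⟩
  · rw [← inv_div, inv_eq_iff_eq_inv, inv_inj]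
    exact (hratio j).symm
  · simpa only [preimage_inter, preimage_swap_prod, preimage_empty] using
      congrArg (Prod.swap ⁻¹' ·) (hdisj j k hjk)
  · simp only [preimage_iUnion, preimage_swap_prod]

theorem image_homothety {k : ℝ} (hk : 0 < k) (p q : ℝ) (h : HasRatioTiling c S) :
    HasRatioTiling c (Prod.map (k * · + p) (k * · + q) '' S) := by
  obtain ⟨N, x₁, x₂, y₁, y₂, hlt, hratio, hdisj, rfl⟩ := h
  have hinj : Function.Injective (Prod.map (k * · + p) (k * · + q)) :=
    ((strictMono_mul_left_of_pos hk).add_const p).injective.prodMap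
      ((strictMono_mul_left_of_pos hk).add_const q).injective
  refine ⟨N, fun j => k * x₁ j + p, fun j => k * x₂ j + p, fun j => k * y₁ j + q,
    fun j => k * y₂ j + q, fun j => ?_, fun j => ?_, fun j l hjl => ?_, ?_⟩
  · exact ⟨add_lt_add_left (mul_lt_mul_of_pos_left (hlt j).1 hk) p,
      add_lt_add_left (mul_lt_mul_of_pos_left (hlt j).2 hk) q⟩
  · rw [add_sub_add_right_eq_sub, add_sub_add_right_eq_sub, ← mul_sub, ← mul_sub,
      mul_div_mul_left _ _ hk.ne']
    exact hratio j
  · simp only [← image_affine_Ioo hk, ← prodMap_image_prod, ← image_inter hinj, hdisj j l hjl,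
      image_empty]
  · simp only [image_iUnion, prodMap_image_prod, image_affine_Icc' hk]

theorem homothety_box {k : ℝ} (hk : 0 < k) (p q : ℝ) {a b a' b' : ℝ}
    (h : HasRatioTiling c (Icc a b ×ˢ Icc a' b')) :
    HasRatioTiling c (Icc (k * a + p) (k * b + p) ×ˢ Icc (k * a' + q) (k * b' + q)) := by
  simpa only [prodMap_image_prod, image_affine_Icc' hk] using h.image_homothety hk p q

end HasRatioTiling

def IsTileableRatio (c r : ℝ) : Prop :=
  0 < r ∧ HasRatioTiling c (Icc 0 r ×ˢ Icc 0 1)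

theorem isTileableRatio_self {c : ℝ} (hc : 0 < c) : IsTileableRatio c c :=
  ⟨hc, HasRatioTiling.box hc one_pos (Or.inl (by simp))⟩

namespace IsTileableRatio

variable {c r s : ℝ}

theorem add (hr : IsTileableRatio c r) (hs : IsTileableRatio c s) :
    IsTileableRatio c (r + s) := by
  refine ⟨add_pos hr.1 hs.1, ?_⟩
  have hs' : HasRatioTiling c (Icc r (r + s) ×ˢ Icc 0 1) := by
    simpa [add_comm] using hs.2.homothety_box one_pos r 0
  have hdisj : Disjoint (interior (Icc 0 r ×ˢ Icc (0 : ℝ) 1))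
      (interior (Icc r (r + s) ×ˢ Icc (0 : ℝ) 1)) := by
    simp only [interior_prod_eq, interior_Icc]
    exact (Ico_disjoint_Ico_same.mono Ioo_subset_Ico_self Ioo_subset_Ico_self).set_prod_left _ _
  rw [← Icc_union_Icc_eq_Icc hr.1.le (le_add_of_nonneg_right hs.1.le), union_prod]
  exact hr.2.union hs' hdisj

theorem inv (hr : IsTileableRatio c r) : IsTileableRatio c r⁻¹ := by
  refine ⟨inv_pos.2 hr.1, ?_⟩
  have hswap : HasRatioTiling c (Icc 0 1 ×ˢ Icc 0 r) := by
    simpa only [preimage_swap_prod] using hr.2.preimage_swap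
  simpa only [mul_zero, add_zero, mul_one, inv_mul_cancel₀ hr.1.ne'] using
    hswap.homothety_box (inv_pos.2 hr.1) 0 0

theorem natCast_mul (hr : IsTileableRatio c r) {n : ℕ} (hn : n ≠ 0) :
    IsTileableRatio c (n * r) := by
  induction n with
  | zero => exact absurd rfl hn
  | succ n ih =>
    rcases eq_or_ne n 0 with rfl | hn
    · simpa using hr
    · simpa [add_mul] using (ih hn).add hr

theorem ratCast_mul (hc : 0 < c) {q : ℚ} (hq : 0 < q) : IsTileableRatio c (q * c) := by
  have hden : IsTileableRatio c (c / q.den) := by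
    simpa [div_eq_mul_inv, mul_comm] using
      ((isTileableRatio_self hc).inv.natCast_mul q.den_ne_zero).inv
  have hnum : ((q.num.natAbs : ℕ) : ℝ) = q.num := by
    rw [Nat.cast_natAbs, abs_of_pos (by exact_mod_cast Rat.num_pos.2 hq)]
  convert hden.natCast_mul (Int.natAbs_ne_zero.2 (Rat.num_pos.2 hq).ne') using 1
  rw [hnum, Rat.cast_def]
  ring

end IsTileableRatio

theorem isTileableRatio_contFracR {c : ℝ} (hc : 0 < c) : ∀ d : List ℚ, d ≠ [] →
    (∀ a ∈ d, 0 < a) → IsTileableRatio c (contFracR (d.map fun a => (a : ℝ)) c)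
  | [], hne, _ => absurd rfl hne
  | [a], _, hpos => by
    simpa [contFracR] using IsTileableRatio.ratCast_mul hc (hpos a (by simp))
  | a :: b :: rest, _, hpos => by
    simpa [contFracR] using (IsTileableRatio.ratCast_mul hc (hpos a (by simp))).add
      (isTileableRatio_contFracR hc (b :: rest) (List.cons_ne_nil _ _)
        (fun x hx => hpos x (List.mem_cons_of_mem _ hx))).inv

/-- If `c > 0` and there are positive rationals `d₁, …, d_m` with
`d₁c + 1/(d₂c + 1/(⋯ + 1/(d_m c))) = 1`, then the unit square can be tiled by
finitely many axis-parallel rectangles, each of ratio (horizontal over vertical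
side) `c` or `1/c`: their interiors are pairwise disjoint and the union of the
closed rectangles is the closed unit square. -/
theorem stmt_6 (c : ℝ) (hc : 0 < c) (d : List ℚ) (hne : d ≠ [])
    (hpos : ∀ a ∈ d, 0 < a)
    (hcf : contFracR (d.map fun a => (a : ℝ)) c = 1) :
    ∃ (N : ℕ) (x₁ x₂ y₁ y₂ : Fin N → ℝ),
      (∀ j, x₁ j < x₂ j ∧ y₁ j < y₂ j) ∧
      (∀ j, (x₂ j - x₁ j) / (y₂ j - y₁ j) = c ∨ (x₂ j - x₁ j) / (y₂ j - y₁ j) = c⁻¹) ∧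
      (∀ j k, j ≠ k →
        (Set.Ioo (x₁ j) (x₂ j) ×ˢ Set.Ioo (y₁ j) (y₂ j)) ∩
          (Set.Ioo (x₁ k) (x₂ k) ×ˢ Set.Ioo (y₁ k) (y₂ k)) = ∅) ∧
      (⋃ j, Set.Icc (x₁ j) (x₂ j) ×ˢ Set.Icc (y₁ j) (y₂ j)) =
        Set.Icc (0 : ℝ) 1 ×ˢ Set.Icc (0 : ℝ) 1 := by
  have h := (isTileableRatio_contFracR hc d hne hpos).2
  rwa [hcf] at h
end

section
/- Suppose c > 0 is such that a square can be tiled by rectangles of ratios c and 1/c. Then c is an algebraic number and every algebraic conjugate of c (every complex root of the minimal polynomial of c over ℚ) has positive real part. -/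
/-!
Let `F` be a field with embeddings `e : F → ℝ`, `e' : F → ℂ`, and `a ∈ F` with `e a = c`.
Viewing `ℝ` as an `F`-vector space through `e`, there is an additive `φ : ℝ → ℂ` with `φ 1 = 1`
and `φ (e q * x) = e' q * φ x`. Refining a tiling of the unit square to the grid of all
coordinates shows that `∑ (φ x₂ - φ x₁) * conj (φ y₂ - φ y₁)` over the tiles equals
`φ 1 * conj (φ 1) = 1`. A tile of ratio `c` or `1/c` contributes `e' a * |φ h|²` or
`conj (e' a) * |φ w|²`, so `0 < Re (e' a)`. Taking `F = ℚ[X]/(minpoly c)` with `X ↦ c` and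
`X ↦ z` handles the conjugates `z`; if `c` were transcendental, `F = ℚ(X)` with `X ↦ c` and
`X ↦ -c` would make both `c` and `-c` positive.
-/

namespace Finset

variable {α : Type*} [LinearOrder α] {S : Finset α} {s u v m : α}

noncomputable def nextAbove (S : Finset α) (s : α) : α :=
  if h : {u ∈ S | s < u}.Nonempty then {u ∈ S | s < u}.min' h else s

lemma nextAbove_mem_and_lt (hv : v ∈ S) (hsv : s < v) :
    S.nextAbove s ∈ S ∧ s < S.nextAbove s := by
  have h : {u ∈ S | s < u}.Nonempty := ⟨v, mem_filter.2 ⟨hv, hsv⟩⟩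
  rw [nextAbove, dif_pos h]
  exact mem_filter.1 (min'_mem _ h)

lemma nextAbove_mem (hv : v ∈ S) (hsv : s < v) : S.nextAbove s ∈ S :=
  (nextAbove_mem_and_lt hv hsv).1

lemma lt_nextAbove (hv : v ∈ S) (hsv : s < v) : s < S.nextAbove s :=
  (nextAbove_mem_and_lt hv hsv).2

lemma nextAbove_le (hu : u ∈ S) (hsu : s < u) : S.nextAbove s ≤ u := by
  have h : {u ∈ S | s < u}.Nonempty := ⟨u, mem_filter.2 ⟨hu, hsu⟩⟩
  rw [nextAbove, dif_pos h]
  exact min'_le _ _ (mem_filter.2 ⟨hu, hsu⟩)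

lemma le_of_le_of_lt_nextAbove (hu : u ∈ S) (hum : u ≤ m) (hm : m < S.nextAbove s) : u ≤ s :=
  le_of_not_gt fun hsu => (hum.trans_lt hm).not_ge (nextAbove_le hu hsu)

lemma sum_sub_nextAbove {M : Type*} [AddCommGroup M] (f : α → M) {a b : α}
    (ha : a ∈ S) (hb : b ∈ S) (hab : a ≤ b) :
    ∑ s ∈ S with s ∈ Set.Ico a b, (f (S.nextAbove s) - f s) = f b - f a := by
  induction h : #{s ∈ S | s ∈ Set.Ico a b} using Nat.strong_induction_on generalizing a with
  | _ n ih =>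
  rcases hab.eq_or_lt with rfl | hlt
  · simp
  · have hsplit :
        {s ∈ S | s ∈ Set.Ico a b} = insert a {s ∈ S | s ∈ Set.Ico (S.nextAbove a) b} := by
      ext s
      simp only [mem_insert, mem_filter, Set.mem_Ico]
      constructor
      · rintro ⟨hs, has, hsb⟩
        rcases has.eq_or_lt with rfl | has
        · exact Or.inl rfl
        · exact Or.inr ⟨hs, nextAbove_le hs has, hsb⟩
      · rintro (rfl | ⟨hs, has, hsb⟩)
        · exact ⟨ha, le_rfl, hlt⟩
        · exact ⟨hs, (lt_nextAbove hb hlt).le.trans has, hsb⟩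
    have hnotMem : a ∉ {s ∈ S | s ∈ Set.Ico (S.nextAbove a) b} := fun h =>
      (lt_nextAbove hb hlt).not_ge (mem_filter.1 h).2.1
    rw [hsplit, card_insert_of_notMem hnotMem] at h
    rw [hsplit, sum_insert hnotMem,
      ih _ (by omega) (nextAbove_mem hb hlt) (nextAbove_le hb hlt) rfl]
    abel

lemma mem_Ico_iff_mem_Ioo_of_lt_nextAbove (hu : u ∈ S) (hv : v ∈ S) (hsm : s < m)
    (hm : m < S.nextAbove s) : s ∈ Set.Ico u v ↔ m ∈ Set.Ioo u v :=
  ⟨fun h => ⟨h.1.trans_lt hsm, hm.trans_le (nextAbove_le hv h.2)⟩,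
    fun h => ⟨le_of_le_of_lt_nextAbove hu h.1.le hm, hsm.trans h.2⟩⟩

lemma mem_Ico_iff_mem_Icc_of_lt_nextAbove (hu : u ∈ S) (hv : v ∈ S) (hsm : s < m)
    (hm : m < S.nextAbove s) : s ∈ Set.Ico u v ↔ m ∈ Set.Icc u v :=
  ⟨fun h => Set.Ioo_subset_Icc_self ((mem_Ico_iff_mem_Ioo_of_lt_nextAbove hu hv hsm hm).1 h),
    fun h => ⟨le_of_le_of_lt_nextAbove hu h.1 hm, hsm.trans_le h.2⟩⟩

lemma sub_mul_sub_eq_sum_product {R : Type*} [Ring R] {T : Finset α} (f g : α → R)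
    {a b c d : α}
    (ha : a ∈ S) (hb : b ∈ S) (hab : a ≤ b) (hc : c ∈ T) (hd : d ∈ T) (hcd : c ≤ d) :
    (f b - f a) * (g d - g c) =
      ∑ p ∈ {s ∈ S | s ∈ Set.Ico a b} ×ˢ {t ∈ T | t ∈ Set.Ico c d},
        (f (S.nextAbove p.1) - f p.1) * (g (T.nextAbove p.2) - g p.2) := by
  rw [← sum_sub_nextAbove f ha hb hab, ← sum_sub_nextAbove g hc hd hcd, sum_mul_sum,
    sum_product]

end Finset

open Set in
structure IsTiling {ι : Type*} (x₁ x₂ y₁ y₂ : ι → ℝ) (R : Set (ℝ × ℝ)) : Prop where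
  lt : ∀ j, x₁ j < x₂ j ∧ y₁ j < y₂ j
  disjoint : ∀ j k, j ≠ k → (Ioo (x₁ j) (x₂ j) ×ˢ Ioo (y₁ j) (y₂ j)) ∩
    (Ioo (x₁ k) (x₂ k) ×ˢ Ioo (y₁ k) (y₂ k)) = ∅
  iUnion_eq : ⋃ j, Icc (x₁ j) (x₂ j) ×ˢ Icc (y₁ j) (y₂ j) = R

namespace IsTiling

open Set

variable {ι : Type*} {x₁ x₂ y₁ y₂ : ι → ℝ} {a₁ b₁ a₂ b₂ : ℝ}

lemma Ico_subset_Ico (h : IsTiling x₁ x₂ y₁ y₂ (Icc a₁ b₁ ×ˢ Icc a₂ b₂)) (j : ι) :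
    Ico (x₁ j) (x₂ j) ⊆ Ico a₁ b₁ ∧ Ico (y₁ j) (y₂ j) ⊆ Ico a₂ b₂ := by
  have hsub : Icc (x₁ j) (x₂ j) ×ˢ Icc (y₁ j) (y₂ j) ⊆ Icc a₁ b₁ ×ˢ Icc a₂ b₂ :=
    h.iUnion_eq ▸ subset_iUnion (fun j => Icc (x₁ j) (x₂ j) ×ˢ Icc (y₁ j) (y₂ j)) j
  rw [prod_subset_prod_iff' ((nonempty_Icc.2 (h.lt j).1.le).prod (nonempty_Icc.2 (h.lt j).2.le)),
    Icc_subset_Icc_iff (h.lt j).1.le, Icc_subset_Icc_iff (h.lt j).2.le] at hsub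
  exact ⟨Set.Ico_subset_Ico hsub.1.1 hsub.1.2, Set.Ico_subset_Ico hsub.2.1 hsub.2.2⟩

lemma existsUnique_mem_Ico [Fintype ι] (h : IsTiling x₁ x₂ y₁ y₂ (Icc a₁ b₁ ×ˢ Icc a₂ b₂))
    {s t : ℝ} (hs : s ∈ Ico a₁ b₁) (ht : t ∈ Ico a₂ b₂) :
    ∃! j, s ∈ Ico (x₁ j) (x₂ j) ∧ t ∈ Ico (y₁ j) (y₂ j) := by
  classical
  set S := insert b₁ (Finset.univ.image x₁ ∪ Finset.univ.image x₂)
  set T := insert b₂ (Finset.univ.image y₁ ∪ Finset.univ.image y₂)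
  have hS j : x₁ j ∈ S ∧ x₂ j ∈ S := by simp [S]
  have hT j : y₁ j ∈ T ∧ y₂ j ∈ T := by simp [T]
  have hb₁ : b₁ ∈ S := Finset.mem_insert_self _ _
  have hb₂ : b₂ ∈ T := Finset.mem_insert_self _ _
  -- no tile coordinate lies in `(s, m₁]` or `(t, m₂]`: `(m₁, m₂)` sees the same tiles as `(s, t)`
  obtain ⟨m₁, hsm, hm₁⟩ := exists_between (Finset.lt_nextAbove hb₁ hs.2)
  obtain ⟨m₂, htm, hm₂⟩ := exists_between (Finset.lt_nextAbove hb₂ ht.2)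
  have hIoo j : s ∈ Ico (x₁ j) (x₂ j) ∧ t ∈ Ico (y₁ j) (y₂ j) ↔
      (m₁, m₂) ∈ Ioo (x₁ j) (x₂ j) ×ˢ Ioo (y₁ j) (y₂ j) := by
    rw [mem_prod, Finset.mem_Ico_iff_mem_Ioo_of_lt_nextAbove (hS j).1 (hS j).2 hsm hm₁,
      Finset.mem_Ico_iff_mem_Ioo_of_lt_nextAbove (hT j).1 (hT j).2 htm hm₂]
  have hIcc j : s ∈ Ico (x₁ j) (x₂ j) ∧ t ∈ Ico (y₁ j) (y₂ j) ↔
      (m₁, m₂) ∈ Icc (x₁ j) (x₂ j) ×ˢ Icc (y₁ j) (y₂ j) := by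
    rw [mem_prod, Finset.mem_Ico_iff_mem_Icc_of_lt_nextAbove (hS j).1 (hS j).2 hsm hm₁,
      Finset.mem_Ico_iff_mem_Icc_of_lt_nextAbove (hT j).1 (hT j).2 htm hm₂]
  have hm : (m₁, m₂) ∈ Icc a₁ b₁ ×ˢ Icc a₂ b₂ :=
    ⟨⟨hs.1.trans hsm.le, hm₁.le.trans (Finset.nextAbove_le hb₁ hs.2)⟩,
      ⟨ht.1.trans htm.le, hm₂.le.trans (Finset.nextAbove_le hb₂ ht.2)⟩⟩
  rw [← h.iUnion_eq, mem_iUnion] at hm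
  obtain ⟨j, hj⟩ := hm
  refine ⟨j, (hIcc j).2 hj, fun k hk => ?_⟩
  by_contra hkj
  exact eq_empty_iff_forall_notMem.1 (h.disjoint k j hkj) _
    ⟨(hIoo k).1 hk, (hIoo j).1 ((hIcc j).2 hj)⟩

theorem sum_sub_mul_sub [Fintype ι] (h : IsTiling x₁ x₂ y₁ y₂ (Icc a₁ b₁ ×ˢ Icc a₂ b₂))
    (h₁ : a₁ ≤ b₁) (h₂ : a₂ ≤ b₂) {R : Type*} [Ring R] (f g : ℝ → R) :
    ∑ j, (f (x₂ j) - f (x₁ j)) * (g (y₂ j) - g (y₁ j)) = (f b₁ - f a₁) * (g b₂ - g a₂) := by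
  classical
  set S := insert a₁ (insert b₁ (Finset.univ.image x₁ ∪ Finset.univ.image x₂))
  set T := insert a₂ (insert b₂ (Finset.univ.image y₁ ∪ Finset.univ.image y₂))
  have hS j : x₁ j ∈ S ∧ x₂ j ∈ S := by simp [S]
  have hT j : y₁ j ∈ T ∧ y₂ j ∈ T := by simp [T]
  have ha₁ : a₁ ∈ S := by simp [S]
  have hb₁ : b₁ ∈ S := by simp [S]
  have ha₂ : a₂ ∈ T := by simp [T]
  have hb₂ : b₂ ∈ T := by simp [T]
  let cells (u v u' v' : ℝ) := {s ∈ S | s ∈ Ico u v} ×ˢ {t ∈ T | t ∈ Ico u' v'}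
  have mem_cells {u v u' v' : ℝ} {p : ℝ × ℝ} :
      p ∈ cells u v u' v' ↔ p ∈ S ×ˢ T ∧ p.1 ∈ Ico u v ∧ p.2 ∈ Ico u' v' := by
    simp only [cells, Finset.mem_product, Finset.mem_filter]
    tauto
  have hsub {j p} (hp : p ∈ cells (x₁ j) (x₂ j) (y₁ j) (y₂ j)) : p ∈ cells a₁ b₁ a₂ b₂ := by
    rw [mem_cells] at hp ⊢
    exact ⟨hp.1, (h.Ico_subset_Ico j).1 hp.2.1, (h.Ico_subset_Ico j).2 hp.2.2⟩
  have hunique {j p} (hp : p ∈ cells (x₁ j) (x₂ j) (y₁ j) (y₂ j)) :=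
    h.existsUnique_mem_Ico (mem_cells.1 (hsub hp)).2.1 (mem_cells.1 (hsub hp)).2.2
  have hdisj : ((Finset.univ : Finset ι) : Set ι).PairwiseDisjoint
      fun j => cells (x₁ j) (x₂ j) (y₁ j) (y₂ j) := by
    intro j _ k _ hjk
    refine Finset.disjoint_left.2 fun p hpj hpk => hjk ?_
    exact (hunique hpj).unique (mem_cells.1 hpj).2 (mem_cells.1 hpk).2
  have hunion : Finset.univ.biUnion (fun j => cells (x₁ j) (x₂ j) (y₁ j) (y₂ j)) =
      cells a₁ b₁ a₂ b₂ := by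
    ext p
    simp only [Finset.mem_biUnion, Finset.mem_univ, true_and]
    refine ⟨fun ⟨j, hp⟩ => hsub hp, fun hp => ?_⟩
    obtain ⟨j, hj, -⟩ := h.existsUnique_mem_Ico (mem_cells.1 hp).2.1 (mem_cells.1 hp).2.2
    exact ⟨j, mem_cells.2 ⟨(mem_cells.1 hp).1, hj⟩⟩
  calc ∑ j, (f (x₂ j) - f (x₁ j)) * (g (y₂ j) - g (y₁ j))
      = ∑ j, ∑ p ∈ cells (x₁ j) (x₂ j) (y₁ j) (y₂ j),
          (f (S.nextAbove p.1) - f p.1) * (g (T.nextAbove p.2) - g p.2) :=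
        Finset.sum_congr rfl fun j _ => Finset.sub_mul_sub_eq_sum_product f g (hS j).1 (hS j).2
          (h.lt j).1.le (hT j).1 (hT j).2 (h.lt j).2.le
    _ = ∑ p ∈ cells a₁ b₁ a₂ b₂,
          (f (S.nextAbove p.1) - f p.1) * (g (T.nextAbove p.2) - g p.2) := by
        rw [← Finset.sum_biUnion hdisj, hunion]
    _ = (f b₁ - f a₁) * (g b₂ - g a₂) :=
        (Finset.sub_mul_sub_eq_sum_product f g ha₁ hb₁ h₁ ha₂ hb₂ h₂).symm

end IsTiling

lemma exists_addMonoidHom_map_one_map_mul {F K L : Type*} [Field F] [Field K] [Ring L]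
    (e : F →+* K) (e' : F →+* L) :
    ∃ φ : K →+ L, φ 1 = 1 ∧ ∀ q x, φ (e q * x) = e' q * φ x := by
  let := e.toAlgebra
  obtain ⟨ℓ, hℓ⟩ := Module.Projective.exists_dual_eq_one F (one_ne_zero : (1 : K) ≠ 0)
  refine ⟨e'.toAddMonoidHom.comp ℓ.toAddMonoidHom, by simp [hℓ], fun q x => ?_⟩
  have hsmul : e q * x = q • x := (Algebra.smul_def q x).symm
  simp [hsmul]

lemma eq_mul_or_eq_mul_of_div_eq {K : Type*} [Field K] {w h c : K} (hw : w ≠ 0) (hh : h ≠ 0)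
    (hr : w / h = c ∨ w / h = c⁻¹) : w = c * h ∨ h = c * w := by
  refine hr.imp (fun hr => (div_eq_iff hh).1 hr) (fun hr => (div_eq_iff hw).1 ?_)
  rw [← inv_div, hr, inv_inv]

open ComplexConjugate in
lemma Complex.re_mul_conj_nonpos {z u v : ℂ} (hz : z.re ≤ 0) (h : u = z * v ∨ v = z * u) :
    (u * conj v).re ≤ 0 := by
  rcases h with rfl | rfl
  · rw [mul_assoc, Complex.mul_conj, Complex.re_mul_ofReal]
    exact mul_nonpos_of_nonpos_of_nonneg hz (Complex.normSq_nonneg v)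
  · rw [map_mul, mul_left_comm, Complex.mul_conj, Complex.re_mul_ofReal, Complex.conj_re]
    exact mul_nonpos_of_nonpos_of_nonneg hz (Complex.normSq_nonneg u)

lemma Transcendental.exists_ringHom_fractionRing {R K : Type*} [CommRing R] [IsDomain R]
    [Field K] [Algebra R K] {x : K} (hx : Transcendental R x) :
    ∃ e : FractionRing (Polynomial R) →+* K, e (algebraMap (Polynomial R) _ Polynomial.X) = x :=
  ⟨IsFractionRing.lift (transcendental_iff_injective.1 hx), by simp⟩

namespace IsTiling

open Set ComplexConjugate

variable {ι : Type*} [Fintype ι] {x₁ x₂ y₁ y₂ : ι → ℝ}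

theorem re_pos (h : IsTiling x₁ x₂ y₁ y₂ (Icc 0 1 ×ˢ Icc 0 1)) {c : ℝ}
    (hratio : ∀ j, (x₂ j - x₁ j) / (y₂ j - y₁ j) = c ∨ (x₂ j - x₁ j) / (y₂ j - y₁ j) = c⁻¹)
    {F : Type*} [Field F] (e : F →+* ℝ) (e' : F →+* ℂ) {a : F} (ha : e a = c) :
    0 < (e' a).re := by
  obtain ⟨φ, hφ1, hφmul⟩ := exists_addMonoidHom_map_one_map_mul e e'
  have hsum := h.sum_sub_mul_sub zero_le_one zero_le_one φ (fun x => conj (φ x))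
  simp only [hφ1, map_zero, map_one, sub_zero, mul_one] at hsum
  by_contra! hre
  have hterm j : ((φ (x₂ j) - φ (x₁ j)) * (conj (φ (y₂ j)) - conj (φ (y₁ j)))).re ≤ 0 := by
    rw [← map_sub, ← map_sub, ← map_sub]
    refine Complex.re_mul_conj_nonpos hre ?_
    rcases eq_mul_or_eq_mul_of_div_eq (sub_pos.2 (h.lt j).1).ne' (sub_pos.2 (h.lt j).2).ne'
      (hratio j) with hw | hh
    · exact Or.inl (by rw [hw, ← ha, hφmul])
    · exact Or.inr (by rw [hh, ← ha, hφmul])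
  have := Finset.sum_nonpos (s := Finset.univ) fun j _ => hterm j
  rw [← Complex.re_sum, hsum, Complex.one_re] at this
  exact this.not_gt one_pos

end IsTiling

theorem stmt_7_general (c : ℝ)
    (htiling : ∃ (N : ℕ) (x₁ x₂ y₁ y₂ : Fin N → ℝ),
      (∀ j, x₁ j < x₂ j ∧ y₁ j < y₂ j) ∧
      (∀ j, (x₂ j - x₁ j) / (y₂ j - y₁ j) = c ∨ (x₂ j - x₁ j) / (y₂ j - y₁ j) = c⁻¹) ∧
      (∀ j k, j ≠ k →
        (Set.Ioo (x₁ j) (x₂ j) ×ˢ Set.Ioo (y₁ j) (y₂ j)) ∩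
          (Set.Ioo (x₁ k) (x₂ k) ×ˢ Set.Ioo (y₁ k) (y₂ k)) = ∅) ∧
      (⋃ j, Set.Icc (x₁ j) (x₂ j) ×ˢ Set.Icc (y₁ j) (y₂ j)) =
        Set.Icc (0 : ℝ) 1 ×ˢ Set.Icc (0 : ℝ) 1) :
    IsAlgebraic ℚ c ∧
      ∀ z : ℂ, Polynomial.aeval z (minpoly ℚ (c : ℂ)) = 0 → 0 < z.re := by
  obtain ⟨N, x₁, x₂, y₁, y₂, hlt, hratio, hdisj, hcover⟩ := htiling
  have key {F : Type} [Field F] (e : F →+* ℝ) (e' : F →+* ℂ) {a : F} (ha : e a = c) :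
      0 < (e' a).re :=
    IsTiling.re_pos ⟨hlt, hdisj, hcover⟩ hratio e e' ha
  have halg : IsAlgebraic ℚ c := by
    by_contra hc
    obtain ⟨e, he⟩ := Transcendental.exists_ringHom_fractionRing hc
    obtain ⟨e', he'⟩ := Transcendental.exists_ringHom_fractionRing
      (x := -c) fun h => hc (by simpa using h.neg)
    have hpos := key e (Complex.ofRealHom.comp e) he
    have hneg := key e (Complex.ofRealHom.comp e') he
    simp only [RingHom.comp_apply, he, he', Complex.ofRealHom_eq_coe, Complex.ofReal_re]
      at hpos hneg
    linarith
  refine ⟨halg, fun z hz => ?_⟩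
  have hmin : minpoly ℚ (c : ℂ) = minpoly ℚ c :=
    minpoly.algebraMap_eq (algebraMap ℝ ℂ).injective c
  rw [hmin] at hz
  have := Fact.mk (minpoly.irreducible halg.isIntegral)
  have hpos := key (AdjoinRoot.lift (algebraMap ℚ ℝ) c (minpoly.aeval ℚ c))
    (AdjoinRoot.lift (algebraMap ℚ ℂ) z hz) (AdjoinRoot.lift_root _)
  rwa [AdjoinRoot.lift_root (i := algebraMap ℚ ℂ) hz] at hpos

/-- If `c > 0` and some square (here the unit square) can be tiled by finitely many
axis-parallel rectangles of ratios `c` and `1/c` (pairwise disjoint interiors, union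
equal to the square), then `c` is algebraic over `ℚ` and every algebraic conjugate
of `c`, i.e. every complex root of its minimal polynomial over `ℚ`, has positive
real part. -/
theorem stmt_7 (c : ℝ) (hc : 0 < c)
    (htiling : ∃ (N : ℕ) (x₁ x₂ y₁ y₂ : Fin N → ℝ),
      (∀ j, x₁ j < x₂ j ∧ y₁ j < y₂ j) ∧
      (∀ j, (x₂ j - x₁ j) / (y₂ j - y₁ j) = c ∨ (x₂ j - x₁ j) / (y₂ j - y₁ j) = c⁻¹) ∧
      (∀ j k, j ≠ k →
        (Set.Ioo (x₁ j) (x₂ j) ×ˢ Set.Ioo (y₁ j) (y₂ j)) ∩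
          (Set.Ioo (x₁ k) (x₂ k) ×ˢ Set.Ioo (y₁ k) (y₂ k)) = ∅) ∧
      (⋃ j, Set.Icc (x₁ j) (x₂ j) ×ˢ Set.Icc (y₁ j) (y₂ j)) =
        Set.Icc (0 : ℝ) 1 ×ˢ Set.Icc (0 : ℝ) 1) :
    IsAlgebraic ℚ c ∧
      ∀ z : ℂ, Polynomial.aeval z (minpoly ℚ (c : ℂ)) = 0 → 0 < z.re :=
  stmt_7_general c htiling
end

section
/- Let c > 0 be algebraic such that every algebraic conjugate of c has positive real part. Let p be the minimal polynomial of c over ℚ and set C(z) = (p(−z) − p(z))/(p(−z) + p(z)). Then C is an odd rational function with rational coefficients, C(c) = 1, and every complex root of C(z) = 1 has positive real part. -/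
open Polynomial

/- The numerator and denominator of `C` are the polynomials `p(-X) ∓ p(X)`, and the denominator is
nonzero because its constant term is `2 p(0)`, while `p(0) ≠ 0` as `0` is not a conjugate of `c`.
Since `(b - a) / (b + a) = 1` forces `a = 0` (the case `b + a = 0` gives the junk value `0`), the
roots of `C(z) = 1` are roots of `p`, hence conjugates of `c`. Finally `C(c) = 1` because `p(-c) ≠ 0`:
`-c` has negative real part, as `c` itself is a conjugate of `c`. -/

lemma aeval_comp_neg_X {R A : Type*} [CommRing R] [Ring A] [Algebra R A] (p : R[X]) (z : A) :
    aeval z (p.comp (-X)) = aeval (-z) p := by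
  simp [aeval_comp]

lemma comp_neg_X_add_self_ne_zero {F : Type*} [Field F] [NeZero (2 : F)] {p : F[X]}
    (hp : p.coeff 0 ≠ 0) : p.comp (-X) + p ≠ 0 := by
  intro h
  have hcoeff : 2 * p.coeff 0 = 0 := by
    simpa [coeff_zero_eq_eval_zero, eval_comp, two_mul] using congrArg (coeff · 0) h
  exact hp ((mul_eq_zero.mp hcoeff).resolve_left two_ne_zero)

lemma eq_zero_of_sub_div_add_eq_one {K : Type*} [Field K] [NeZero (2 : K)] {a b : K}
    (h : (b - a) / (b + a) = 1) : a = 0 := by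
  have hba : b + a ≠ 0 := by
    rintro hba
    simp [hba] at h
  have : b - a = b + a := (div_eq_one_iff_eq hba).mp h
  have h2a : 2 * a = 0 := by linear_combination -this
  exact (mul_eq_zero.mp h2a).resolve_left two_ne_zero

theorem stmt_8_general (c : ℝ)
    (hconj : ∀ z : ℂ, aeval z (minpoly ℚ (c : ℂ)) = 0 → 0 < z.re)
    (C : ℂ → ℂ)
    (hC : ∀ z : ℂ, C z =
      (aeval (-z) (minpoly ℚ (c : ℂ)) - aeval z (minpoly ℚ (c : ℂ))) /
      (aeval (-z) (minpoly ℚ (c : ℂ)) + aeval z (minpoly ℚ (c : ℂ)))) :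
    (∃ P Q : Polynomial ℚ, Q ≠ 0 ∧ ∀ z : ℂ, C z = aeval z P / aeval z Q) ∧
    (∀ z : ℂ, aeval (-z) (minpoly ℚ (c : ℂ)) + aeval z (minpoly ℚ (c : ℂ)) ≠ 0 →
      C (-z) = - C z) ∧
    C (c : ℂ) = 1 ∧
    (∀ z : ℂ, C z = 1 → 0 < z.re) := by
  set p := minpoly ℚ (c : ℂ)
  have hp0 : p.coeff 0 ≠ 0 := fun h => by
    simpa using hconj 0 (by simp [← coeff_zero_eq_aeval_zero', h])
  have hc : 0 < c := by simpa using hconj c (minpoly.aeval ℚ _)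
  have hpc : aeval (-(c : ℂ)) p ≠ 0 := fun h => by
    linarith [(by simpa using hconj _ h : c < 0)]
  refine ⟨⟨p.comp (-X) - p, p.comp (-X) + p, comp_neg_X_add_self_ne_zero hp0, fun z => ?_⟩,
    fun z _ => ?_, ?_, fun z hz => hconj z (eq_zero_of_sub_div_add_eq_one (hC z ▸ hz))⟩
  · rw [hC z, map_sub, map_add, aeval_comp_neg_X]
  · rw [hC z, hC (-z), neg_neg, ← neg_div, neg_sub, add_comm]
  · rw [hC, minpoly.aeval, sub_zero, add_zero, div_self hpc]

/-- Let `c > 0` be algebraic with all algebraic conjugates of positive real part,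
let `p` be its minimal polynomial over `ℚ` and set
`C(z) = (p(−z) − p(z))/(p(−z) + p(z))`.  Then `C` is a rational function with
rational coefficients, it is odd wherever defined, `C(c) = 1`, and every complex
root of `C(z) = 1` has positive real part. -/
theorem stmt_8 (c : ℝ) (hc : 0 < c) (halg : IsAlgebraic ℚ (c : ℂ))
    (hconj : ∀ z : ℂ, aeval z (minpoly ℚ (c : ℂ)) = 0 → 0 < z.re)
    (C : ℂ → ℂ)
    (hC : ∀ z : ℂ, C z =
      (aeval (-z) (minpoly ℚ (c : ℂ)) - aeval z (minpoly ℚ (c : ℂ))) /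
      (aeval (-z) (minpoly ℚ (c : ℂ)) + aeval z (minpoly ℚ (c : ℂ)))) :
    (∃ P Q : Polynomial ℚ, Q ≠ 0 ∧ ∀ z : ℂ, C z = aeval z P / aeval z Q) ∧
    (∀ z : ℂ, aeval (-z) (minpoly ℚ (c : ℂ)) + aeval z (minpoly ℚ (c : ℂ)) ≠ 0 →
      C (-z) = - C z) ∧
    C (c : ℂ) = 1 ∧
    (∀ z : ℂ, C z = 1 → 0 < z.re) :=
  stmt_8_general c hconj C hC
end

section
/- Let p ∈ ℚ[z] be the minimal polynomial of a positive real number c², and suppose all roots of p other than c² are negative reals, say p(z²) = (z² − c²)·Π_{k=1}^n (z² + b_k²) with b₁ > ... > b_n > 0. Choose rationals a₁ > b₁ > a₂ > ... > a_n > b_n > 0 and set q(z) = z·Π_{k=1}^n (z² + a_k²), C(z) = q(z)/(z q(z) − p(z²)). Then C(c) = 1/c, C is odd, every zero z₀ of C satisfies Re z₀ = 0, and C'(z₀) > 0 at each zero (including z₀ = 0, where C'(0) = −q'(0)/p(0) > 0). -/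
open Polynomial

/-!
At `z = c` the term `p(c²)` vanishes, so the denominator is `c q(c)` and `C(c) = 1/c`; `q` is odd
and `z q(z) - p(z²)` is even, so `C` is odd. A zero of `C` is a zero of `q`, i.e. `0` or a point
with `z² = -a_l²`, and there `C' = q'/(-p(z²))` is real. At `z² = -a_l²` its sign is that of
`-∏_{k≠l} (a_k² - a_l²) · ∏_k (b_k² - a_l²)`, which interlacing makes positive: for `k ≠ l` the
factors `a_k² - a_l²` and `b_k² - a_l²` have the same sign, while `b_l² - a_l² < 0`.
-/

theorem HasDerivAt.mul_of_eq_zero_left {𝕜 : Type*} [NontriviallyNormedField 𝕜] {f g : 𝕜 → 𝕜}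
    {f' x : 𝕜} (hf : HasDerivAt f f' x) (hfx : f x = 0) (hg : DifferentiableAt 𝕜 g x) :
    HasDerivAt (fun y => f y * g y) (f' * g x) x := by
  simpa [hfx] using hf.fun_mul hg.hasDerivAt

theorem Fin.lt_of_interlacing {α : Type*} [Preorder α] {n : ℕ} {a b : Fin n → α}
    (hlt : ∀ k, b k < a k)
    (hsucc : ∀ (k : ℕ) (h : k + 1 < n), a ⟨k + 1, h⟩ < b ⟨k, Nat.lt_of_succ_lt h⟩)
    {j l : Fin n} (hjl : j < l) : a l < b j := by
  suffices ∀ l, j.1 + 1 ≤ l → ∀ hl : l < n, a ⟨l, hl⟩ < b j from this l hjl l.2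
  intro l hjl
  induction l, hjl using Nat.le_induction with
  | base => exact fun hl => hsucc j hl
  | succ l hjl ih =>
    exact fun hl => (hsucc l hl).trans ((hlt _).trans (ih (Nat.lt_of_succ_lt hl)))

section Interlacing

variable {ι : Type*} [LinearOrder ι] {a b : ι → ℝ}

theorem sq_sub_mul_sq_sub_pos_of_interlacing (hb : ∀ k, 0 < b k) (hba : ∀ k, b k < a k)
    (hab : ∀ {j l}, j < l → a l < b j) {k l : ι} (hkl : k ≠ l) :
    0 < (a k ^ 2 - a l ^ 2) * (b k ^ 2 - a l ^ 2) := by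
  have hal : 0 < a l := (hb l).trans (hba l)
  rcases hkl.lt_or_gt with h | h
  · have := hab h
    exact mul_pos (by nlinarith [hba k]) (by nlinarith)
  · have := hab h
    have := hba k
    exact mul_pos_of_neg_of_neg (by nlinarith [hba l, hb k]) (by nlinarith [hba l, hb k])

theorem prod_sq_sub_mul_prod_sq_sub_neg_of_interlacing [Fintype ι] (hb : ∀ k, 0 < b k)
    (hba : ∀ k, b k < a k) (hab : ∀ {j l}, j < l → a l < b j) (l : ι) :
    (∏ k ∈ Finset.univ.erase l, (a k ^ 2 - a l ^ 2)) * ∏ k, (b k ^ 2 - a l ^ 2) < 0 := by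
  rw [← Finset.mul_prod_erase _ _ (Finset.mem_univ l), mul_left_comm, ← Finset.prod_mul_distrib]
  refine mul_neg_of_neg_of_pos (by nlinarith [hb l, hba l]) (Finset.prod_pos fun k hk => ?_)
  exact sq_sub_mul_sq_sub_pos_of_interlacing hb hba hab (Finset.ne_of_mem_erase hk)

end Interlacing

theorem Complex.re_eq_zero_of_sq_eq_neg_sq {z : ℂ} {r : ℝ} (h : z ^ 2 = -(r : ℂ) ^ 2) :
    z.re = 0 := by
  rw [← neg_one_mul, ← Complex.I_sq, ← mul_pow, sq_eq_sq_iff_eq_or_eq_neg] at h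
  rcases h with rfl | rfl <;> simp

namespace InterlacingFraction

variable {ι : Type*} [Fintype ι] (A B : ι → ℝ) (c : ℝ)

/-- `numer A` is `q`, and `denom A B c z` is `z q(z) - p(z²)` for
`p(w) = (w - c²) ∏ₖ (w + Bₖ²)`. -/
def numer (z : ℂ) : ℂ := z * ∏ k, (z ^ 2 + (A k : ℂ) ^ 2)

def denom (z : ℂ) : ℂ :=
  z * numer A z - (z ^ 2 - (c : ℂ) ^ 2) * ∏ k, (z ^ 2 + (B k : ℂ) ^ 2)

variable {A B c}

omit [Fintype ι] in
theorem prod_sq_add_of_sq_eq_neg_sq (s : Finset ι) {z : ℂ} {r : ℝ}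
    (hz : z ^ 2 = -(r : ℂ) ^ 2) :
    ∏ k ∈ s, (z ^ 2 + (A k : ℂ) ^ 2) = ((∏ k ∈ s, (A k ^ 2 - r ^ 2) : ℝ) : ℂ) := by
  push_cast
  exact Finset.prod_congr rfl fun k _ => by rw [hz]; ring

theorem numer_neg (z : ℂ) : numer A (-z) = -numer A z := by
  simp [numer, neg_mul]

theorem denom_neg (z : ℂ) : denom A B c (-z) = denom A B c z := by
  simp [denom, numer_neg]

theorem numer_div_denom_self (hc : c ≠ 0) : numer A c / denom A B c c = 1 / c := by
  have hprod : ∏ k, ((c : ℂ) ^ 2 + (A k : ℂ) ^ 2) ≠ 0 := by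
    rw [Finset.prod_ne_zero_iff]
    intro k _
    exact_mod_cast (by positivity : c ^ 2 + A k ^ 2 ≠ 0)
  have hnum : numer A c ≠ 0 := mul_ne_zero (by exact_mod_cast hc) hprod
  rw [denom, sub_self, zero_mul, sub_zero, div_mul_cancel_right₀ hnum, one_div]

theorem numer_eq_zero_iff {z : ℂ} :
    numer A z = 0 ↔ z = 0 ∨ ∃ l, z ^ 2 = -(A l : ℂ) ^ 2 := by
  simp [numer, Finset.prod_eq_zero_iff, add_eq_zero_iff_eq_neg]

theorem differentiable_denom : Differentiable ℂ (denom A B c) := by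
  unfold denom numer
  fun_prop

theorem hasDerivAt_numer_div_denom_zero (hc : c ≠ 0) (hB : ∀ k, B k ≠ 0) :
    HasDerivAt (fun w => numer A w / denom A B c w)
      (((∏ k, A k ^ 2) / (c ^ 2 * ∏ k, B k ^ 2) : ℝ) : ℂ) 0 := by
  have hden : denom A B c 0 = ((c ^ 2 * ∏ k, B k ^ 2 : ℝ) : ℂ) := by simp [denom, numer]
  have hden0 : denom A B c 0 ≠ 0 := by
    rw [hden]
    exact_mod_cast mul_ne_zero (pow_ne_zero 2 hc)
      (Finset.prod_ne_zero_iff.2 fun k _ => pow_ne_zero 2 (hB k))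
  have hF : (fun w => numer A w / denom A B c w) =
      fun w => w * ((∏ k, (w ^ 2 + (A k : ℂ) ^ 2)) / denom A B c w) := by
    ext w; rw [numer, mul_div_assoc]
  have hg : DifferentiableAt ℂ (fun w => (∏ k, (w ^ 2 + (A k : ℂ) ^ 2)) / denom A B c w) 0 :=
    (by fun_prop : DifferentiableAt ℂ (fun w : ℂ => ∏ k, (w ^ 2 + (A k : ℂ) ^ 2)) 0).div
      (differentiable_denom 0) hden0
  rw [hF]
  refine ((hasDerivAt_id 0).mul_of_eq_zero_left rfl hg).congr_deriv ?_
  rw [hden]; push_cast; simp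

theorem hasDerivAt_numer_div_denom_of_sq_eq [DecidableEq ι] {z : ℂ} (l : ι)
    (hz : z ^ 2 = -(A l : ℂ) ^ 2) (hden0 : denom A B c z ≠ 0) :
    HasDerivAt (fun w => numer A w / denom A B c w)
      (((-2 * A l ^ 2 * ∏ k ∈ Finset.univ.erase l, (A k ^ 2 - A l ^ 2)) /
        ((A l ^ 2 + c ^ 2) * ∏ k, (B k ^ 2 - A l ^ 2)) : ℝ) : ℂ) z := by
  have hfz : z ^ 2 + (A l : ℂ) ^ 2 = 0 := by rw [hz]; ring
  have hF : (fun w => numer A w / denom A B c w) = fun w => (w ^ 2 + (A l : ℂ) ^ 2) *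
      (w * (∏ k ∈ Finset.univ.erase l, (w ^ 2 + (A k : ℂ) ^ 2)) / denom A B c w) := by
    ext w
    rw [numer, ← Finset.mul_prod_erase _ _ (Finset.mem_univ l)]
    ring
  have hden : denom A B c z = (((A l ^ 2 + c ^ 2) * ∏ k, (B k ^ 2 - A l ^ 2) : ℝ) : ℂ) := by
    rw [denom, numer, Finset.prod_eq_zero (Finset.mem_univ l) hfz,
      prod_sq_add_of_sq_eq_neg_sq _ hz, hz]
    push_cast; ring
  have hf : HasDerivAt (fun w : ℂ => w ^ 2 + (A l : ℂ) ^ 2) (2 * z) z := by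
    simpa using (hasDerivAt_pow 2 z).add_const ((A l : ℂ) ^ 2)
  have hg : DifferentiableAt ℂ (fun w =>
      w * (∏ k ∈ Finset.univ.erase l, (w ^ 2 + (A k : ℂ) ^ 2)) / denom A B c w) z :=
    (by fun_prop : DifferentiableAt ℂ
      (fun w : ℂ => w * ∏ k ∈ Finset.univ.erase l, (w ^ 2 + (A k : ℂ) ^ 2)) z).div
      (differentiable_denom z) hden0
  rw [hF]
  refine (hf.mul_of_eq_zero_left hfz hg).congr_deriv ?_
  rw [hden, prod_sq_add_of_sq_eq_neg_sq _ hz, ← mul_div_assoc, Complex.ofReal_div]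
  congr 1
  simp only [Complex.ofReal_mul, Complex.ofReal_neg, Complex.ofReal_pow, Complex.ofReal_ofNat]
  linear_combination (2 * ((∏ k ∈ Finset.univ.erase l, (A k ^ 2 - A l ^ 2) : ℝ) : ℂ)) * hz

theorem re_eq_zero_and_exists_pos_hasDerivAt [LinearOrder ι] (hc : c ≠ 0) (hB : ∀ k, 0 < B k)
    (hBA : ∀ k, B k < A k) (hAB : ∀ {j l}, j < l → A l < B j) {z : ℂ}
    (hden0 : denom A B c z ≠ 0) (hz : numer A z = 0) :
    z.re = 0 ∧ ∃ r : ℝ, 0 < r ∧ HasDerivAt (fun w => numer A w / denom A B c w) r z := by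
  rcases numer_eq_zero_iff.1 hz with rfl | ⟨l, hl⟩
  · refine ⟨rfl, _, ?_, hasDerivAt_numer_div_denom_zero hc fun k => (hB k).ne'⟩
    have hA : ∀ k, 0 < A k := fun k => (hB k).trans (hBA k)
    exact div_pos (Finset.prod_pos fun k _ => pow_pos (hA k) 2)
      (mul_pos (by positivity) (Finset.prod_pos fun k _ => pow_pos (hB k) 2))
  · refine ⟨Complex.re_eq_zero_of_sq_eq_neg_sq hl, _, ?_,
      hasDerivAt_numer_div_denom_of_sq_eq l hl hden0⟩
    have hAl : 0 < A l := (hB l).trans (hBA l)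
    set P := ∏ k ∈ Finset.univ.erase l, (A k ^ 2 - A l ^ 2)
    set Q := ∏ k, (B k ^ 2 - A l ^ 2)
    have hPQ : P * Q < 0 := prod_sq_sub_mul_prod_sq_sub_neg_of_interlacing hB hBA hAB l
    have hQ : Q ≠ 0 := by rintro hQ; simp [hQ] at hPQ
    have hr : -2 * A l ^ 2 * P / ((A l ^ 2 + c ^ 2) * Q) =
        2 * A l ^ 2 * -(P * Q) / ((A l ^ 2 + c ^ 2) * Q ^ 2) := by
      field_simp
    rw [hr]
    exact div_pos (mul_pos (by positivity) (neg_pos.2 hPQ)) (by positivity)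

end InterlacingFraction

open InterlacingFraction

theorem stmt_10_general (c : ℝ) (hc : 0 < c) (n : ℕ)
    (b : Fin n → ℝ) (a : Fin n → ℚ)
    (hbpos : ∀ k : Fin n, 0 < b k)
    (hfact : (minpoly ℚ (c ^ 2)).map (algebraMap ℚ ℝ) =
      (X - Polynomial.C (c ^ 2)) * ∏ k : Fin n, (X + Polynomial.C ((b k) ^ 2)))
    (hab : ∀ k : Fin n, b k < (a k : ℝ))
    (hba : ∀ (k : ℕ) (h : k + 1 < n),
      ((a ⟨k + 1, h⟩ : ℚ) : ℝ) < b ⟨k, Nat.lt_of_succ_lt h⟩)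
    (C : ℂ → ℂ)
    (hC : ∀ z : ℂ, C z =
      (z * ∏ k : Fin n, (z ^ 2 + ((a k : ℚ) : ℂ) ^ 2)) /
      (z * (z * ∏ k : Fin n, (z ^ 2 + ((a k : ℚ) : ℂ) ^ 2)) -
        aeval (z ^ 2) (minpoly ℚ (c ^ 2)))) :
    C (c : ℂ) = 1 / (c : ℂ) ∧
    (∀ z : ℂ,
      (z * (z * ∏ k : Fin n, (z ^ 2 + ((a k : ℚ) : ℂ) ^ 2)) -
        aeval (z ^ 2) (minpoly ℚ (c ^ 2))) ≠ 0 → C (-z) = - C z) ∧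
    (∀ z : ℂ,
      (z * (z * ∏ k : Fin n, (z ^ 2 + ((a k : ℚ) : ℂ) ^ 2)) -
        aeval (z ^ 2) (minpoly ℚ (c ^ 2))) ≠ 0 → C z = 0 →
      z.re = 0 ∧ 0 < (deriv C z).re ∧ (deriv C z).im = 0) := by
  let A : Fin n → ℝ := fun k => a k
  have hp (w : ℂ) :
      aeval w (minpoly ℚ (c ^ 2)) = (w - (c : ℂ) ^ 2) * ∏ k, (w + (b k : ℂ) ^ 2) := by
    rw [← aeval_map_algebraMap ℝ, hfact]
    simp
  have hq (z : ℂ) : z * ∏ k, (z ^ 2 + ((a k : ℚ) : ℂ) ^ 2) = numer A z := by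
    simp [numer, A]
  have hD (z : ℂ) : z * (z * ∏ k, (z ^ 2 + ((a k : ℚ) : ℂ) ^ 2)) -
      aeval (z ^ 2) (minpoly ℚ (c ^ 2)) = denom A b c z := by
    rw [hq, hp, denom]
  obtain rfl : C = fun z => numer A z / denom A b c z := funext fun z => by rw [hC, hD, hq]
  simp only [hD]
  refine ⟨numer_div_denom_self hc.ne', fun z _ => by rw [numer_neg, denom_neg, neg_div],
    fun z hden hz => ?_⟩
  obtain ⟨hre, r, hr, hderiv⟩ := re_eq_zero_and_exists_pos_hasDerivAt hc.ne' hbpos hab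
    (Fin.lt_of_interlacing hab hba) hden ((div_eq_zero_iff.1 hz).resolve_right hden)
  rw [hderiv.deriv]
  exact ⟨hre, hr, Complex.ofReal_im r⟩

/-- Let `p ∈ ℚ[z]` be the minimal polynomial of `c² > 0` and suppose all its roots
other than `c²` are negative reals `−bₖ²` with `b₁ > ⋯ > b_n > 0`.  Choose rationals
`a₁ > b₁ > a₂ > ⋯ > a_n > b_n` and set `q(z) = z ∏ₖ (z² + aₖ²)`,
`C(z) = q(z)/(z q(z) − p(z²))`.  Then `C(c) = 1/c`, `C` is odd (wherever defined),
every zero `z₀` of `C` satisfies `Re z₀ = 0`, and at each zero the derivative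
`C'(z₀)` is a positive real number. -/
theorem stmt_10 (c : ℝ) (hc : 0 < c) (n : ℕ) (halg : IsAlgebraic ℚ (c ^ 2))
    (b : Fin n → ℝ) (a : Fin n → ℚ)
    (hbpos : ∀ k : Fin n, 0 < b k)
    (hfact : (minpoly ℚ (c ^ 2)).map (algebraMap ℚ ℝ) =
      (X - Polynomial.C (c ^ 2)) * ∏ k : Fin n, (X + Polynomial.C ((b k) ^ 2)))
    (hab : ∀ k : Fin n, b k < (a k : ℝ))
    (hba : ∀ (k : ℕ) (h : k + 1 < n),
      ((a ⟨k + 1, h⟩ : ℚ) : ℝ) < b ⟨k, Nat.lt_of_succ_lt h⟩)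
    (C : ℂ → ℂ)
    (hC : ∀ z : ℂ, C z =
      (z * ∏ k : Fin n, (z ^ 2 + ((a k : ℚ) : ℂ) ^ 2)) /
      (z * (z * ∏ k : Fin n, (z ^ 2 + ((a k : ℚ) : ℂ) ^ 2)) -
        aeval (z ^ 2) (minpoly ℚ (c ^ 2)))) :
    C (c : ℂ) = 1 / (c : ℂ) ∧
    (∀ z : ℂ,
      (z * (z * ∏ k : Fin n, (z ^ 2 + ((a k : ℚ) : ℂ) ^ 2)) -
        aeval (z ^ 2) (minpoly ℚ (c ^ 2))) ≠ 0 → C (-z) = - C z) ∧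
    (∀ z : ℂ,
      (z * (z * ∏ k : Fin n, (z ^ 2 + ((a k : ℚ) : ℂ) ^ 2)) -
        aeval (z ^ 2) (minpoly ℚ (c ^ 2))) ≠ 0 → C z = 0 →
      z.re = 0 ∧ 0 < (deriv C z).re ∧ (deriv C z).im = 0) :=
  stmt_10_general c hc n b a hbpos hfact hab hba C hC
end

section
/- Existence and uniqueness (Weyl's theorem): For any finite graph with conductances c_{kl} ∈ ℂ (each with Re c_{kl} > 0 on edges) in which every connected component contains at least one of the boundary vertices 1,...,b, and any prescribed boundary values U_1,...,U_b ∈ ℂ, there exist unique U_{b+1},...,U_n ∈ ℂ such that ∑_{l=1}^n c_{kl}(U_k − U_l) = 0 for every k > b. -/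
/-!
Uniqueness is an energy argument: for symmetric `c`, pairing `Δ U = laplacian c U` with `conj U`
gives `2 ∑ₖ conj (U k) (Δ U)(k) = ∑ₖₗ c k l |U k - U l|²`, whose real part is a sum of nonnegative
terms. If `U` vanishes on the boundary and is harmonic inside, the left side is zero, so `U` is
constant along every edge, hence on every component, hence zero. Thus the linear map
`U ↦ (U on the boundary, Δ U inside)` is injective on a finite-dimensional space, and therefore
bijective, which is existence and uniqueness at once.
-/

open Finset

section DirichletProblem

variable {ι : Type*} [Fintype ι]

def laplacian (c : ι → ι → ℂ) : (ι → ℂ) →ₗ[ℂ] (ι → ℂ) where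
  toFun U k := ∑ l, c k l * (U k - U l)
  map_add' U V := by
    funext k
    simp only [Pi.add_apply, ← sum_add_distrib]
    exact sum_congr rfl fun l _ => by ring
  map_smul' a U := by
    funext k
    simp only [Pi.smul_apply, smul_eq_mul, RingHom.id_apply, mul_sum]
    exact sum_congr rfl fun l _ => by ring

theorem laplacian_apply (c : ι → ι → ℂ) (U : ι → ℂ) (k : ι) :
    laplacian c U k = ∑ l, c k l * (U k - U l) := rfl

theorem two_mul_sum_conj_mul_laplacian (c : ι → ι → ℂ) (hsymm : ∀ k l, c k l = c l k)
    (U : ι → ℂ) :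
    2 * ∑ k, star (U k) * laplacian c U k =
      ∑ k, ∑ l, c k l * (Complex.normSq (U k - U l) : ℂ) := by
  have hswap : ∑ k, ∑ l, c k l * star (U k) * (U k - U l) =
      ∑ k, ∑ l, c k l * (-star (U l)) * (U k - U l) := by
    rw [sum_comm]
    refine sum_congr rfl fun k _ => sum_congr rfl fun l _ => ?_
    rw [hsymm l k]
    ring
  calc 2 * ∑ k, star (U k) * laplacian c U k
      = ∑ k, ∑ l, c k l * star (U k) * (U k - U l)
        + ∑ k, ∑ l, c k l * star (U k) * (U k - U l) := by
        rw [two_mul]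
        simp only [laplacian_apply, mul_sum]
        congr 1 <;> exact sum_congr rfl fun k _ => sum_congr rfl fun l _ => by ring
    _ = ∑ k, ∑ l, c k l * (star (U k - U l) * (U k - U l)) := by
        nth_rewrite 2 [hswap]
        simp only [← sum_add_distrib, star_sub]
        exact sum_congr rfl fun k _ => sum_congr rfl fun l _ => by ring
    _ = ∑ k, ∑ l, c k l * (Complex.normSq (U k - U l) : ℂ) := by
        simp only [Complex.star_def, ← Complex.normSq_eq_conj_mul_self]

theorem eq_of_sum_conj_mul_laplacian_eq_zero (c : ι → ι → ℂ) (hsymm : ∀ k l, c k l = c l k)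
    (hre : ∀ k l, c k l = 0 ∨ 0 < (c k l).re) (U : ι → ℂ)
    (henergy : ∑ k, star (U k) * laplacian c U k = 0) {k l : ι} (hkl : c k l ≠ 0) :
    U k = U l := by
  have hnonneg : ∀ k l, 0 ≤ (c k l).re * Complex.normSq (U k - U l) := fun k l => by
    rcases hre k l with h | h
    · simp [h]
    · exact mul_nonneg h.le (Complex.normSq_nonneg _)
  have hsum : ∑ k, ∑ l, (c k l).re * Complex.normSq (U k - U l) = 0 := by
    have := two_mul_sum_conj_mul_laplacian c hsymm U
    rw [henergy, mul_zero] at this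
    simpa [Complex.re_sum, Complex.mul_re] using (congrArg Complex.re this).symm
  have hterm : (c k l).re * Complex.normSq (U k - U l) = 0 :=
    (sum_eq_zero_iff_of_nonneg fun l _ => hnonneg k l).mp
      ((sum_eq_zero_iff_of_nonneg fun k _ => sum_nonneg fun l _ => hnonneg k l).mp hsum k
        (mem_univ k)) l (mem_univ l)
  have hpos : 0 < (c k l).re := (hre k l).resolve_left hkl
  rw [← sub_eq_zero, ← Complex.normSq_eq_zero]
  exact (mul_eq_zero.mp hterm).resolve_left hpos.ne'

variable (B : ι → Prop) [DecidablePred B]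

def dirichletMap (c : ι → ι → ℂ) : (ι → ℂ) →ₗ[ℂ] (ι → ℂ) :=
  LinearMap.pi fun k =>
    if B k then LinearMap.proj k else (LinearMap.proj k).comp (laplacian c)

theorem dirichletMap_apply (c : ι → ι → ℂ) (U : ι → ℂ) (k : ι) :
    dirichletMap B c U k = if B k then U k else laplacian c U k := by
  by_cases hk : B k <;> simp [dirichletMap, hk]

theorem dirichletMap_eq_iff (c : ι → ι → ℂ) (U W : ι → ℂ) :
    dirichletMap B c U = (fun k => if B k then W k else 0) ↔
      (∀ k, B k → U k = W k) ∧ ∀ k, ¬ B k → laplacian c U k = 0 := by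
  simp only [funext_iff, dirichletMap_apply]
  constructor
  · intro h
    exact ⟨fun k hk => by simpa [hk] using h k, fun k hk => by simpa [hk] using h k⟩
  · rintro ⟨hB, hint⟩ k
    split_ifs with hk
    exacts [hB k hk, hint k hk]

theorem dirichletMap_injective (c : ι → ι → ℂ) (hsymm : ∀ k l, c k l = c l k)
    (hre : ∀ k l, c k l = 0 ∨ 0 < (c k l).re)
    (hcomp : ∀ k, ∃ u, B u ∧ Relation.ReflTransGen (fun i j => c i j ≠ 0) k u) :
    Function.Injective (dirichletMap B c) := by
  rw [← LinearMap.ker_eq_bot, LinearMap.ker_eq_bot']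
  intro U hU
  obtain ⟨hB, hint⟩ := (dirichletMap_eq_iff B c U 0).mp (by rw [hU]; ext k; simp)
  have henergy : ∑ k, star (U k) * laplacian c U k = 0 := sum_eq_zero fun k _ => by
    by_cases hk : B k
    · simp [hB k hk]
    · simp [hint k hk]
  have hconst {x y : ι} (hpath : Relation.ReflTransGen (fun i j => c i j ≠ 0) x y) :
      U x = U y := by
    induction hpath with
    | refl => rfl
    | tail _ hedge ih =>
      exact ih.trans (eq_of_sum_conj_mul_laplacian_eq_zero c hsymm hre U henergy hedge)
  funext k
  obtain ⟨u, hu, hpath⟩ := hcomp k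
  simp [hconst hpath, hB u hu]

theorem existsUnique_dirichlet (c : ι → ι → ℂ) (hsymm : ∀ k l, c k l = c l k)
    (hre : ∀ k l, c k l = 0 ∨ 0 < (c k l).re)
    (hcomp : ∀ k, ∃ u, B u ∧ Relation.ReflTransGen (fun i j => c i j ≠ 0) k u)
    (W : ι → ℂ) :
    ∃! U : ι → ℂ, (∀ k, B k → U k = W k) ∧ ∀ k, ¬ B k → laplacian c U k = 0 := by
  have hinj := dirichletMap_injective B c hsymm hre hcomp
  have hbij : Function.Bijective (dirichletMap B c) :=
    ⟨hinj, LinearMap.injective_iff_surjective.mp hinj⟩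
  simpa only [dirichletMap_eq_iff] using hbij.existsUnique fun k => if B k then W k else 0

end DirichletProblem

theorem stmt_13_general (n b : ℕ)
    (c : Fin n → Fin n → ℂ)
    (hsymm : ∀ k l : Fin n, c k l = c l k)
    (hre : ∀ k l : Fin n, c k l = 0 ∨ 0 < (c k l).re)
    (hcomp : ∀ k : Fin n, ∃ u : Fin n, (u : ℕ) < b ∧
      Relation.ReflTransGen (fun i j : Fin n => c i j ≠ 0) k u)
    (W : Fin n → ℂ) :
    ∃! U : Fin n → ℂ,
      (∀ k : Fin n, (k : ℕ) < b → U k = W k) ∧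
      (∀ k : Fin n, b ≤ (k : ℕ) → ∑ l, c k l * (U k - U l) = 0) := by
  simpa only [not_lt, laplacian_apply] using
    existsUnique_dirichlet (fun k : Fin n => (k : ℕ) < b) c hsymm hre hcomp W

/-- Existence and uniqueness (Weyl's theorem): for a finite network on vertices
`0, …, n−1` with boundary vertices those of index `< b`, symmetric conductances with
zero diagonal which are either zero or of positive real part, such that every
connected component contains a boundary vertex, and for any prescribed boundary
values, there is a unique choice of interior voltages making the voltage function
discrete harmonic at every interior vertex. -/
theorem stmt_13 (n b : ℕ) (hb : 1 ≤ b) (hbn : b ≤ n)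
    (c : Fin n → Fin n → ℂ)
    (hsymm : ∀ k l : Fin n, c k l = c l k)
    (hdiag : ∀ k : Fin n, c k k = 0)
    (hre : ∀ k l : Fin n, c k l = 0 ∨ 0 < (c k l).re)
    (hcomp : ∀ k : Fin n, ∃ u : Fin n, (u : ℕ) < b ∧
      Relation.ReflTransGen (fun i j : Fin n => c i j ≠ 0) k u)
    (W : Fin n → ℂ) :
    ∃! U : Fin n → ℂ,
      (∀ k : Fin n, (k : ℕ) < b → U k = W k) ∧
      (∀ k : Fin n, b ≤ (k : ℕ) → ∑ l, c k l * (U k - U l) = 0) :=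
  stmt_13_general n b c hsymm hre hcomp W
end

section
/- Derivative of the response: with notation as above and real positive conductances, ∂C_{uv}/∂c_j = (V_{ku} − V_{lu})(V_{kv} − V_{lv}), where k, l are the endpoints of edge j and V_{pq} is the matrix of the solution map sending boundary voltages (U_1,...,U_b) to the full voltage vector (U_1,...,U_n). Consequently, the matrix ∂C/∂c_j is positive semidefinite. -/
/-!
The response entry `C_{uv}` is the Dirichlet energy `E_c(V_v, V_u)`, and since `V_v` is
harmonic in the interior, either argument of `E_c` may be replaced by any function with the same
boundary values. Changing `c_j` to `t` therefore gives the exact identity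
`C(t)_{uv} - C_{uv} = (t - c_j) ΔV(t)_v ΔV_u`, with `Δ` the voltage drop across edge `j`.
The energy of `V(t)_v - V_v` yields `t |ΔV(t)_v - ΔV_v| ≤ |t - c_j| |ΔV_v|`, so the drop is
continuous in `t` and the difference quotient converges to `ΔV_u ΔV_v`. This is a rank-one
matrix `a aᵀ`, hence positive semidefinite.
-/

/-- The conductance matrix of a network with `m` edges with endpoints `e₁ j`, `e₂ j`
and edge conductances `x j`. -/
noncomputable def condMat {n m : ℕ} (e₁ e₂ : Fin m → Fin n) (x : Fin m → ℝ)
    (k l : Fin n) : ℝ :=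
  ∑ j : Fin m, if (e₁ j = k ∧ e₂ j = l) ∨ (e₁ j = l ∧ e₂ j = k) then x j else 0

open Finset Function Filter Topology

theorem hasDerivAt_of_eventually_sub_eq_mul {𝕜 : Type*} [NontriviallyNormedField 𝕜]
    {f g : 𝕜 → 𝕜} {a : 𝕜} (h : ∀ᶠ t in 𝓝 a, f t - f a = (t - a) * g t)
    (hg : ContinuousAt g a) : HasDerivAt f (g a) a := by
  rw [hasDerivAt_iff_tendsto_slope]
  refine (hg.tendsto.mono_left nhdsWithin_le_nhds).congr' ?_
  filter_upwards [nhdsWithin_le_nhds h, self_mem_nhdsWithin] with t ht hne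
  rw [slope_def_field, ht, mul_div_cancel_left₀ _ (sub_ne_zero.2 hne)]

theorem sum_sum_ite_or_swap {ι R : Type*} [Fintype ι] [DecidableEq ι] [AddCommMonoid R]
    (a c : ι) (h : ι → ι → R) (hdiag : ∀ k, h k k = 0) :
    ∑ k, ∑ l, (if (a = k ∧ c = l) ∨ (a = l ∧ c = k) then h k l else 0) = h a c + h c a := by
  by_cases hac : a = c
  · subst hac
    have hor : ∀ k l, (a = k ∧ a = l) ∨ (a = l ∧ a = k) ↔ a = k ∧ a = l := by tauto
    simp [hor, ite_and, hdiag]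
  · have hsplit : ∀ k l, (if (a = k ∧ c = l) ∨ (a = l ∧ c = k) then h k l else 0) =
        (if a = k ∧ c = l then h k l else 0) + (if c = k ∧ a = l then h k l else 0) := by
      intro k l
      by_cases h₁ : a = k ∧ c = l
      · obtain ⟨rfl, rfl⟩ := h₁
        simp [hac]
      · simp [h₁, and_comm]
    simp [hsplit, sum_add_distrib, ite_and, sum_ite_eq]

namespace Network

variable {n m : ℕ} (e₁ e₂ : Fin m → Fin n)

def drop (f : Fin n → ℝ) (j : Fin m) : ℝ := f (e₁ j) - f (e₂ j)

def energy (x : Fin m → ℝ) (f g : Fin n → ℝ) : ℝ :=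
  ∑ j, x j * drop e₁ e₂ f j * drop e₁ e₂ g j

noncomputable def laplacian (x : Fin m → ℝ) (f : Fin n → ℝ) (k : Fin n) : ℝ :=
  ∑ l, condMat e₁ e₂ x k l * (f k - f l)

def IsHarmonicOn (x : Fin m → ℝ) (s : Set (Fin n)) (f : Fin n → ℝ) : Prop :=
  ∀ k ∈ s, laplacian e₁ e₂ x f k = 0

variable {e₁ e₂}

theorem drop_sub (f g : Fin n → ℝ) (j : Fin m) :
    drop e₁ e₂ (f - g) j = drop e₁ e₂ f j - drop e₁ e₂ g j := by
  simp only [drop, Pi.sub_apply]; ring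

theorem energy_comm (x : Fin m → ℝ) (f g : Fin n → ℝ) :
    energy e₁ e₂ x f g = energy e₁ e₂ x g f :=
  sum_congr rfl fun _ _ => by ring

theorem energy_sub_left (x : Fin m → ℝ) (f₁ f₂ g : Fin n → ℝ) :
    energy e₁ e₂ x (f₁ - f₂) g = energy e₁ e₂ x f₁ g - energy e₁ e₂ x f₂ g := by
  simp only [energy, drop_sub, ← sum_sub_distrib]
  exact sum_congr rfl fun _ _ => by ring

theorem energy_update (x : Fin m → ℝ) (j : Fin m) (t : ℝ) (f g : Fin n → ℝ) :
    energy e₁ e₂ (update x j t) f g =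
      energy e₁ e₂ x f g + (t - x j) * drop e₁ e₂ f j * drop e₁ e₂ g j := by
  have h : update x j t = x + Pi.single j (t - x j) := by
    ext i; rcases eq_or_ne i j with rfl | hi <;> simp [*]
  simp only [energy, h, Pi.add_apply, add_mul, sum_add_distrib, Pi.single_apply, ite_mul,
    zero_mul, sum_ite_eq']
  simp

theorem mul_sq_drop_le_energy {x : Fin m → ℝ} (hx : ∀ i, 0 ≤ x i) (f : Fin n → ℝ) (j : Fin m) :
    x j * drop e₁ e₂ f j ^ 2 ≤ energy e₁ e₂ x f f := by
  rw [sq, ← mul_assoc]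
  exact single_le_sum (f := fun i => x i * drop e₁ e₂ f i * drop e₁ e₂ f i)
    (fun i _ => by rw [mul_assoc]; exact mul_nonneg (hx i) (mul_self_nonneg _)) (mem_univ j)

theorem sum_mul_laplacian (x : Fin m → ℝ) (f g : Fin n → ℝ) :
    ∑ k, g k * laplacian e₁ e₂ x f k = energy e₁ e₂ x f g := by
  have h : ∀ k, g k * laplacian e₁ e₂ x f k = ∑ j, ∑ l,
      if (e₁ j = k ∧ e₂ j = l) ∨ (e₁ j = l ∧ e₂ j = k) then x j * g k * (f k - f l) else 0 := by
    intro k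
    simp only [laplacian, condMat, mul_sum, sum_mul]
    rw [sum_comm]
    refine sum_congr rfl fun l _ => sum_congr rfl fun j _ => ?_
    split_ifs <;> ring
  simp only [h]
  rw [sum_comm]
  refine sum_congr rfl fun j _ => ?_
  rw [sum_sum_ite_or_swap _ _ (fun k l => x j * g k * (f k - f l)) (fun k => by simp), drop, drop]
  ring

theorem energy_eq_zero_of_isHarmonicOn {x : Fin m → ℝ} {s : Set (Fin n)} {f g : Fin n → ℝ}
    (hf : IsHarmonicOn e₁ e₂ x s f) (hg : Set.EqOn g 0 sᶜ) : energy e₁ e₂ x f g = 0 := by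
  rw [← sum_mul_laplacian]
  refine sum_eq_zero fun k _ => ?_
  by_cases hk : k ∈ s
  · rw [hf k hk, mul_zero]
  · rw [hg hk, Pi.zero_apply, zero_mul]

theorem energy_congr_right_of_isHarmonicOn {x : Fin m → ℝ} {s : Set (Fin n)}
    {f g g' : Fin n → ℝ} (hf : IsHarmonicOn e₁ e₂ x s f) (hg : Set.EqOn g g' sᶜ) :
    energy e₁ e₂ x f g = energy e₁ e₂ x f g' := by
  rw [← sub_eq_zero, energy_comm x f g, energy_comm x f g', ← energy_sub_left, energy_comm]
  exact energy_eq_zero_of_isHarmonicOn hf fun k hk => sub_eq_zero.2 (hg hk)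

theorem laplacian_eq_energy_of_eqOn_single {x : Fin m → ℝ} {s : Set (Fin n)} {p : Fin n}
    {f g : Fin n → ℝ} (hp : p ∉ s) (hf : IsHarmonicOn e₁ e₂ x s f)
    (hg : Set.EqOn g (Pi.single p 1) sᶜ) : laplacian e₁ e₂ x f p = energy e₁ e₂ x f g := by
  rw [← sum_mul_laplacian, sum_eq_single p]
  · rw [hg hp, Pi.single_eq_same, one_mul]
  · intro k _ hkp
    by_cases hk : k ∈ s
    · rw [hf k hk, mul_zero]
    · rw [hg hk, Pi.single_eq_of_ne hkp, zero_mul]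
  · simp

theorem energy_update_sub_energy {x : Fin m → ℝ} {s : Set (Fin n)} {j : Fin m} {t : ℝ}
    {f f' g g' : Fin n → ℝ} (hf' : IsHarmonicOn e₁ e₂ (update x j t) s f')
    (hg : IsHarmonicOn e₁ e₂ x s g) (hf : Set.EqOn f f' sᶜ) (hg' : Set.EqOn g' g sᶜ) :
    energy e₁ e₂ (update x j t) f' g' - energy e₁ e₂ x f g =
      (t - x j) * drop e₁ e₂ f' j * drop e₁ e₂ g j := by
  rw [energy_congr_right_of_isHarmonicOn hf' hg', energy_comm x f,
    energy_congr_right_of_isHarmonicOn hg hf, energy_comm x g, energy_update]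
  ring

theorem mul_abs_drop_sub_le {x : Fin m → ℝ} {s : Set (Fin n)} {j : Fin m} {t : ℝ}
    {f f' : Fin n → ℝ} (hx : ∀ i, 0 ≤ x i) (ht : 0 ≤ t) (hf : IsHarmonicOn e₁ e₂ x s f)
    (hf' : IsHarmonicOn e₁ e₂ (update x j t) s f') (hff' : Set.EqOn f' f sᶜ) :
    t * |drop e₁ e₂ f' j - drop e₁ e₂ f j| ≤ |t - x j| * |drop e₁ e₂ f j| := by
  have hw : Set.EqOn (f' - f) 0 sᶜ := fun k hk => sub_eq_zero.2 (hff' hk)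
  have hxt : ∀ i, 0 ≤ update x j t i := by
    intro i
    rcases eq_or_ne i j with rfl | hi <;> simp [*]
  have henergy : energy e₁ e₂ (update x j t) (f' - f) (f' - f) =
      -((t - x j) * drop e₁ e₂ f j * drop e₁ e₂ (f' - f) j) := by
    rw [energy_sub_left, energy_eq_zero_of_isHarmonicOn hf' hw, energy_update,
      energy_eq_zero_of_isHarmonicOn hf hw]
    ring
  set d := drop e₁ e₂ (f' - f) j
  have hle : t * |d| * |d| ≤ |t - x j| * |drop e₁ e₂ f j| * |d| :=
    calc t * |d| * |d| = update x j t j * d ^ 2 := by simp [mul_assoc, abs_mul_abs_self, sq]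
      _ ≤ energy e₁ e₂ (update x j t) (f' - f) (f' - f) := mul_sq_drop_le_energy hxt _ j
      _ ≤ |(t - x j) * drop e₁ e₂ f j * d| := henergy ▸ neg_le_abs _
      _ = |t - x j| * |drop e₁ e₂ f j| * |d| := by simp only [abs_mul]
  rw [← drop_sub]
  rcases (abs_nonneg d).eq_or_lt with hd | hd
  · rw [← hd, mul_zero]
    positivity
  · exact le_of_mul_le_mul_right hle hd

theorem tendsto_drop_update {x : Fin m → ℝ} {s : Set (Fin n)} {j : Fin m}
    {F : ℝ → Fin n → ℝ} {f : Fin n → ℝ} (hx : ∀ i, 0 ≤ x i) (hxj : 0 < x j)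
    (hF : ∀ t, 0 < t → IsHarmonicOn e₁ e₂ (update x j t) s (F t))
    (hf : IsHarmonicOn e₁ e₂ x s f) (hFf : ∀ t, 0 < t → Set.EqOn (F t) f sᶜ) :
    Tendsto (fun t => drop e₁ e₂ (F t) j) (𝓝 (x j)) (𝓝 (drop e₁ e₂ f j)) := by
  rw [tendsto_iff_norm_sub_tendsto_zero]
  refine squeeze_zero' (Eventually.of_forall fun _ => norm_nonneg _) ?_
    (g := fun t => |t - x j| * |drop e₁ e₂ f j| / t) ?_
  · filter_upwards [lt_mem_nhds hxj] with t ht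
    rw [Real.norm_eq_abs, le_div_iff₀ ht, mul_comm]
    exact mul_abs_drop_sub_le hx ht.le hf (hF t ht) (hFf t ht)
  · have hg : ContinuousAt (fun t => |t - x j| * |drop e₁ e₂ f j| / t) (x j) :=
      (((continuous_sub_right _).abs.mul continuous_const).continuousAt).div
        continuousAt_id hxj.ne'
    simpa using hg.tendsto

end Network

theorem sum_sum_mul_mul_mul_nonneg {ι : Type*} [Fintype ι] (a w : ι → ℝ) :
    0 ≤ ∑ i, ∑ k, a i * a k * w i * w k := by
  have h : ∑ i, ∑ k, a i * a k * w i * w k = (∑ i, a i * w i) ^ 2 := by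
    rw [sq, sum_mul_sum]
    exact sum_congr rfl fun _ _ => sum_congr rfl fun _ _ => by ring
  exact h ▸ sq_nonneg _

open Network in
theorem stmt_15_general (n b m : ℕ) (hbn : b ≤ n)
    (e₁ e₂ : Fin m → Fin n)
    (V : (Fin m → ℝ) → Fin n → Fin b → ℝ)
    (Cm : (Fin m → ℝ) → Fin b → Fin b → ℝ)
    (x₀ : Fin m → ℝ) (hx₀ : ∀ j, 0 < x₀ j)
    (hV : ∀ x : Fin m → ℝ, (∀ j, 0 < x j) → ∀ v : Fin b,
      (∀ u : Fin b, V x (Fin.castLE hbn u) v = if u = v then 1 else 0) ∧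
      (∀ k : Fin n, b ≤ (k : ℕ) →
        ∑ l, condMat e₁ e₂ x k l * (V x k v - V x l v) = 0))
    (hCm : ∀ x : Fin m → ℝ, (∀ j, 0 < x j) → ∀ u v : Fin b,
      Cm x u v = ∑ k, condMat e₁ e₂ x (Fin.castLE hbn u) k *
        (V x (Fin.castLE hbn u) v - V x k v)) :
    ∀ (j : Fin m) (u v : Fin b),
      HasDerivAt (fun t : ℝ => Cm (Function.update x₀ j t) u v)
        ((V x₀ (e₁ j) u - V x₀ (e₂ j) u) * (V x₀ (e₁ j) v - V x₀ (e₂ j) v)) (x₀ j) ∧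
      ∀ W : Fin b → ℝ, 0 ≤ ∑ u' : Fin b, ∑ v' : Fin b,
        ((V x₀ (e₁ j) u' - V x₀ (e₂ j) u') * (V x₀ (e₁ j) v' - V x₀ (e₂ j) v')) *
          W u' * W v' := by
  intro j u v
  set s : Set (Fin n) := {k | b ≤ (k : ℕ)}
  have hpos : ∀ t, 0 < t → ∀ i, 0 < update x₀ j t i := by
    intro t ht i
    rcases eq_or_ne i j with rfl | hi <;> simp [*]
  have harm : ∀ x, (∀ i, 0 < x i) → ∀ w, IsHarmonicOn e₁ e₂ x s (V x · w) :=
    fun x hx w => (hV x hx w).2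
  have hbdry : ∀ x, (∀ i, 0 < x i) → ∀ w,
      Set.EqOn (V x · w) (Pi.single (Fin.castLE hbn w) 1) sᶜ := by
    intro x hx w k hk
    obtain ⟨k, rfl⟩ : ∃ k' : Fin b, Fin.castLE hbn k' = k := ⟨⟨k, not_le.1 hk⟩, rfl⟩
    simp only [(hV x hx w).1, Pi.single_apply, Fin.castLE_inj]
  have hbdry₀ : ∀ x, (∀ i, 0 < x i) → ∀ w, Set.EqOn (V x · w) (V x₀ · w) sᶜ :=
    fun x hx w => (hbdry x hx w).trans (hbdry x₀ hx₀ w).symm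
  have hresp : ∀ x, (∀ i, 0 < x i) → ∀ u v, Cm x u v = energy e₁ e₂ x (V x · v) (V x · u) :=
    fun x hx u v => (hCm x hx u v).trans <|
      laplacian_eq_energy_of_eqOn_single (s := s) (not_le.2 u.2) (harm x hx v) (hbdry x hx u)
  have hdiff : ∀ᶠ t in 𝓝 (x₀ j), Cm (update x₀ j t) u v - Cm (update x₀ j (x₀ j)) u v =
      (t - x₀ j) * (drop e₁ e₂ (V x₀ · u) j * drop e₁ e₂ (V (update x₀ j t) · v) j) := by
    filter_upwards [lt_mem_nhds (hx₀ j)] with t ht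
    rw [update_eq_self, hresp _ (hpos t ht), hresp x₀ hx₀, energy_update_sub_energy
      (harm _ (hpos t ht) v) (harm x₀ hx₀ u) (hbdry₀ _ (hpos t ht) v).symm
      (hbdry₀ _ (hpos t ht) u)]
    ring
  have hcont : ContinuousAt
      (fun t => drop e₁ e₂ (V x₀ · u) j * drop e₁ e₂ (V (update x₀ j t) · v) j) (x₀ j) := by
    refine continuousAt_const.mul ?_
    rw [ContinuousAt, update_eq_self]
    exact tendsto_drop_update (fun i => (hx₀ i).le) (hx₀ j) (fun t ht => harm _ (hpos t ht) v)
      (harm x₀ hx₀ v) fun t ht => hbdry₀ _ (hpos t ht) v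
  refine ⟨?_, fun W => sum_sum_mul_mul_mul_nonneg _ W⟩
  have hderiv := hasDerivAt_of_eventually_sub_eq_mul hdiff hcont
  rwa [update_eq_self] at hderiv

/-- Derivative of the response: let `V x` be the (unique) solution map of the
discrete Dirichlet problem for a network with positive edge conductances
`x = (c_1, …, c_m)` and every component meeting the boundary, and let `Cm x` be the
response matrix.  Then `∂C_{uv}/∂c_j = (V_{ku} − V_{lu})(V_{kv} − V_{lv})` where
`k, l` are the endpoints of edge `j`; consequently `∂C/∂c_j` is positive
semidefinite. -/
theorem stmt_15 (n b m : ℕ) (hb : 1 ≤ b) (hbn : b ≤ n)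
    (e₁ e₂ : Fin m → Fin n) (hee : ∀ j : Fin m, e₁ j ≠ e₂ j)
    (V : (Fin m → ℝ) → Fin n → Fin b → ℝ)
    (Cm : (Fin m → ℝ) → Fin b → Fin b → ℝ)
    (x₀ : Fin m → ℝ) (hx₀ : ∀ j, 0 < x₀ j)
    (hcomp : ∀ k : Fin n, ∃ u : Fin n, (u : ℕ) < b ∧
      Relation.ReflTransGen (fun i j : Fin n => condMat e₁ e₂ x₀ i j ≠ 0) k u)
    (hV : ∀ x : Fin m → ℝ, (∀ j, 0 < x j) → ∀ v : Fin b,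
      (∀ u : Fin b, V x (Fin.castLE hbn u) v = if u = v then 1 else 0) ∧
      (∀ k : Fin n, b ≤ (k : ℕ) →
        ∑ l, condMat e₁ e₂ x k l * (V x k v - V x l v) = 0))
    (hCm : ∀ x : Fin m → ℝ, (∀ j, 0 < x j) → ∀ u v : Fin b,
      Cm x u v = ∑ k, condMat e₁ e₂ x (Fin.castLE hbn u) k *
        (V x (Fin.castLE hbn u) v - V x k v)) :
    ∀ (j : Fin m) (u v : Fin b),
      HasDerivAt (fun t : ℝ => Cm (Function.update x₀ j t) u v)
        ((V x₀ (e₁ j) u - V x₀ (e₂ j) u) * (V x₀ (e₁ j) v - V x₀ (e₂ j) v)) (x₀ j) ∧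
      ∀ W : Fin b → ℝ, 0 ≤ ∑ u' : Fin b, ∑ v' : Fin b,
        ((V x₀ (e₁ j) u' - V x₀ (e₂ j) u') * (V x₀ (e₁ j) v' - V x₀ (e₂ j) v')) *
          W u' * W v' :=
  stmt_15_general n b m hbn e₁ e₂ V Cm x₀ hx₀ hV hCm
end

section
/- The two-variable function C(c₁,c₂) = (c₁+c₂)(c₁²+c₂²)/(c₁²+2c₂²) is a rational function with rational coefficients, is degree-1 homogeneous, and has nonnegative partial derivatives for c₁, c₂ > 0, yet it does not map the product of right half-planes into the right half-plane: there exist z₁, z₂ ∈ ℂ with Re z₁ > 0 and Re z₂ > 0 but Re C(z₁,z₂) ≤ 0. -/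
/-!
The first two properties are formal: `C` is a quotient of rational polynomials whose numerator
is homogeneous of degree 3 and whose denominator is homogeneous of degree 2. By the quotient
rule, the numerators of the partial derivatives are the sums of squares
`x⁴ + 4c²x² + c²(x + c)² + c⁴` and `2y⁴ + a²(y - a)²`. The half-plane property fails at
`(1 + i, 1 - i)`, a point with positive real parts where the factor `z₁² + z₂²` vanishes.
-/

noncomputable def akopyan (z₁ z₂ : ℂ) : ℂ :=
  (z₁ + z₂) * (z₁ ^ 2 + z₂ ^ 2) / (z₁ ^ 2 + 2 * z₂ ^ 2)

open Complex MvPolynomial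

theorem akopyan_eq_aeval_div (z₁ z₂ : ℂ) :
    akopyan z₁ z₂ =
      aeval ![z₁, z₂] ((X 0 + X 1) * (X 0 ^ 2 + X 1 ^ 2) : MvPolynomial (Fin 2) ℚ) /
        aeval ![z₁, z₂] (X 0 ^ 2 + 2 * X 1 ^ 2 : MvPolynomial (Fin 2) ℚ) := by
  simp [akopyan]

theorem pow_three_mul_div_pow_two_mul {K : Type*} [Field K] (t a b : K) :
    t ^ 3 * a / (t ^ 2 * b) = t * (a / b) := by
  rcases eq_or_ne t 0 with rfl | ht
  · simp
  · rw [pow_succ', mul_assoc, mul_div_assoc, mul_div_mul_left _ _ (pow_ne_zero 2 ht)]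

theorem akopyan_mul_mul (t z₁ z₂ : ℂ) : akopyan (t * z₁) (t * z₂) = t * akopyan z₁ z₂ := by
  have hN : (t * z₁ + t * z₂) * ((t * z₁) ^ 2 + (t * z₂) ^ 2) =
      t ^ 3 * ((z₁ + z₂) * (z₁ ^ 2 + z₂ ^ 2)) := by ring
  have hD : (t * z₁) ^ 2 + 2 * (t * z₂) ^ 2 = t ^ 2 * (z₁ ^ 2 + 2 * z₂ ^ 2) := by ring
  rw [akopyan, akopyan, hN, hD, pow_three_mul_div_pow_two_mul]

theorem hasDerivAt_akopyan_fst {x c : ℝ} (hD : x ^ 2 + 2 * c ^ 2 ≠ 0) :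
    HasDerivAt (fun x : ℝ => (x + c) * (x ^ 2 + c ^ 2) / (x ^ 2 + 2 * c ^ 2))
      ((x ^ 4 + 4 * c ^ 2 * x ^ 2 + c ^ 2 * (x + c) ^ 2 + c ^ 4) / (x ^ 2 + 2 * c ^ 2) ^ 2) x := by
  have h := (((hasDerivAt_id' x).add_const c).fun_mul
    ((hasDerivAt_pow 2 x).add_const (c ^ 2))).fun_div
      ((hasDerivAt_pow 2 x).add_const (2 * c ^ 2)) hD
  refine h.congr_deriv ?_
  field_simp
  ring

theorem hasDerivAt_akopyan_snd {a y : ℝ} (hD : a ^ 2 + 2 * y ^ 2 ≠ 0) :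
    HasDerivAt (fun y : ℝ => (a + y) * (a ^ 2 + y ^ 2) / (a ^ 2 + 2 * y ^ 2))
      ((2 * y ^ 4 + a ^ 2 * (y - a) ^ 2) / (a ^ 2 + 2 * y ^ 2) ^ 2) y := by
  have h := (((hasDerivAt_id' y).const_add a).fun_mul
    ((hasDerivAt_pow 2 y).const_add (a ^ 2))).fun_div
      (((hasDerivAt_pow 2 y).const_mul 2).const_add (a ^ 2)) hD
  refine h.congr_deriv ?_
  field_simp
  ring

theorem deriv_akopyan_fst_nonneg {x c : ℝ} (hD : x ^ 2 + 2 * c ^ 2 ≠ 0) :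
    0 ≤ deriv (fun x : ℝ => (x + c) * (x ^ 2 + c ^ 2) / (x ^ 2 + 2 * c ^ 2)) x := by
  rw [(hasDerivAt_akopyan_fst hD).deriv]
  positivity

theorem deriv_akopyan_snd_nonneg {a y : ℝ} (hD : a ^ 2 + 2 * y ^ 2 ≠ 0) :
    0 ≤ deriv (fun y : ℝ => (a + y) * (a ^ 2 + y ^ 2) / (a ^ 2 + 2 * y ^ 2)) y := by
  rw [(hasDerivAt_akopyan_snd hD).deriv]
  positivity

theorem akopyan_one_add_I_one_sub_I : akopyan (1 + I) (1 - I) = 0 := by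
  have h : (1 + I) ^ 2 + (1 - I) ^ 2 = 0 := by
    ring_nf
    simp
  simp [akopyan, h]

/-- `C(c₁,c₂) = (c₁+c₂)(c₁²+c₂²)/(c₁²+2c₂²)` is a rational function with rational
coefficients, degree-1 homogeneous, with nonnegative partial derivatives for
`c₁, c₂ > 0`, yet it does not map the product of open right half-planes into the
open right half-plane. -/
theorem stmt_17 :
    (∃ P Q : MvPolynomial (Fin 2) ℚ, ∀ z₁ z₂ : ℂ,
      akopyan z₁ z₂ =
        MvPolynomial.aeval ![z₁, z₂] P / MvPolynomial.aeval ![z₁, z₂] Q) ∧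
    (∀ t z₁ z₂ : ℂ, akopyan (t * z₁) (t * z₂) = t * akopyan z₁ z₂) ∧
    (∀ c₁ c₂ : ℝ, 0 < c₁ → 0 < c₂ →
      0 ≤ deriv (fun x : ℝ => (x + c₂) * (x ^ 2 + c₂ ^ 2) / (x ^ 2 + 2 * c₂ ^ 2)) c₁ ∧
      0 ≤ deriv (fun y : ℝ => (c₁ + y) * (c₁ ^ 2 + y ^ 2) / (c₁ ^ 2 + 2 * y ^ 2)) c₂) ∧
    (∃ z₁ z₂ : ℂ, 0 < z₁.re ∧ 0 < z₂.re ∧ (akopyan z₁ z₂).re ≤ 0) := by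
  refine ⟨⟨_, _, akopyan_eq_aeval_div⟩, akopyan_mul_mul, fun c₁ c₂ hc₁ hc₂ => ?_,
    ⟨1 + I, 1 - I, by simp, by simp, by simp [akopyan_one_add_I_one_sub_I]⟩⟩
  have hD : c₁ ^ 2 + 2 * c₂ ^ 2 ≠ 0 := by positivity
  exact ⟨deriv_akopyan_fst_nonneg hD, deriv_akopyan_snd_nonneg hD⟩
end
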